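/- arXiv:2405.11049 — 4 statements merged into one kernel-verified Lean document; each statement's English description precedes it below -/
import Mathlib

section
/- Suppose (L, g) is an n-dimensional compact Riemannian manifold which is κ-noncollapsed at scale r₀, and let S be a tensor on L such that |∇S| ≤ C₀ and ∫_L |S|² ≤ m. Then sup_L |S| ≤ max{ 2 C₀^{n/(n+2)} / κ^{1/(n+2)}, 2^{(n+2)/2} m^{n/(2(n+2))} / √(κ r₀ⁿ) } · m^{1/(n+2)}. -/
open MeasureTheory

/-- **Sup bound from noncollapsing (Lemma 5.2 / `noncollapsed`).**
Suppose `(L, g)` is an `n`-dimensional compact Riemannian manifold which is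
`κ`-noncollapsed at scale `r₀` (every geodesic ball of radius `0 < r < r₀` has volume
at least `κ rⁿ`), and let `S` be a tensor on `L` with `|∇S| ≤ C₀` and `∫_L |S|² ≤ m`.
Then `sup_L |S| ≤ max{ 2 C₀^{n/(n+2)} / κ^{1/(n+2)},
2^{(n+2)/2} m^{n/(2(n+2))} / √(κ r₀ⁿ) } · m^{1/(n+2)}`.

Here `L` is modelled as a compact metric measure space (with its geodesic distance and
Riemannian measure `μ`), `S : L → ℝ` records the pointwise norm `|S|` of the tensor, and
the bound `|∇S| ≤ C₀` is recorded through its consequence that `|S|` is `C₀`-Lipschitz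
with respect to the geodesic distance. -/
theorem sup_bound_of_noncollapsed
    {L : Type*} [MetricSpace L] [MeasurableSpace L] [BorelSpace L]
    [CompactSpace L] [Nonempty L]
    (μ : Measure L) (n : ℕ) (κ r₀ : ℝ) (hκ : 0 < κ) (hr₀ : 0 < r₀)
    (hnoncollapsed : ∀ (p : L) (r : ℝ), 0 < r → r < r₀ →
      κ * r ^ n ≤ (μ (Metric.ball p r)).toReal)
    (S : L → ℝ) (hScont : Continuous S) (hSnonneg : ∀ p, 0 ≤ S p)
    (C₀ : ℝ) (hC₀ : 0 ≤ C₀)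
    (hgrad : ∀ p q : L, |S p - S q| ≤ C₀ * dist p q)
    (m : ℝ) (hm : ∫ p, (S p) ^ 2 ∂μ ≤ m) :
    ∀ p : L, S p ≤
      max (2 * C₀ ^ ((n : ℝ) / (n + 2)) / κ ^ ((1 : ℝ) / (n + 2)))
          (2 ^ (((n : ℝ) + 2) / 2) * m ^ ((n : ℝ) / (2 * (n + 2))) / Real.sqrt (κ * r₀ ^ n))
        * m ^ ((1 : ℝ) / (n + 2)) := by
  intro p
  set N : ℝ := (n : ℝ) with hN
  have hN0 : (0:ℝ) ≤ N := Nat.cast_nonneg n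
  have hN2 : (0:ℝ) < N + 2 := by linarith
  -- finiteness of balls
  have hballfin : ∀ (q : L) (r : ℝ), 0 < r → r < r₀ → μ (Metric.ball q r) ≠ ⊤ := by
    intro q r hr hrr h
    have h1 := hnoncollapsed q r hr hrr
    rw [h, ENNReal.toReal_top] at h1
    have : (0:ℝ) < κ * r ^ n := by positivity
    linarith
  -- μ is a finite measure
  have hfinmeas : IsFiniteMeasure μ := by
    constructor
    obtain ⟨t, ht⟩ := isCompact_univ.elim_finite_subcover
      (fun q : L => Metric.ball q (r₀ / 2)) (fun q => Metric.isOpen_ball)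
      (fun q _ => Set.mem_iUnion.mpr ⟨q, Metric.mem_ball_self (by positivity)⟩)
    calc μ Set.univ ≤ μ (⋃ q ∈ t, Metric.ball q (r₀ / 2)) := measure_mono ht
      _ ≤ ∑ q ∈ t, μ (Metric.ball q (r₀ / 2)) := measure_biUnion_finset_le _ _
      _ < ⊤ := ENNReal.sum_lt_top.mpr fun q _ =>
          (hballfin q (r₀/2) (by positivity) (by linarith)).lt_top
  -- integrability of S²
  have hint : Integrable (fun q => S q ^ 2) μ := by
    refine (hScont.pow 2).integrable_of_hasCompactSupport ?_
    exact IsCompact.of_isClosed_subset isCompact_univ (isClosed_tsupport _) (Set.subset_univ _)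
  have hm0 : (0:ℝ) ≤ m :=
    le_trans (integral_nonneg fun q => sq_nonneg (S q)) hm
  set M : ℝ := S p with hM
  have hM0 : 0 ≤ M := hSnonneg p
  -- the right hand side is nonnegative
  have hrhs0 : 0 ≤
      max (2 * C₀ ^ (N / (N + 2)) / κ ^ ((1 : ℝ) / (N + 2)))
          (2 ^ ((N + 2) / 2) * m ^ (N / (2 * (N + 2))) / Real.sqrt (κ * r₀ ^ n))
        * m ^ ((1 : ℝ) / (N + 2)) := by
    apply mul_nonneg _ (Real.rpow_nonneg hm0 _)
    exact le_trans (by positivity) (le_max_left _ _)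
  rcases eq_or_lt_of_le hM0 with hMz | hMpos
  · rw [← hMz] at *; exact hrhs0
  -- key claim
  have claim : ∀ r : ℝ, 0 < r → r < r₀ → (∀ q ∈ Metric.ball p r, M / 2 ≤ S q) →
      (M / 2) ^ 2 * (κ * r ^ n) ≤ m := by
    intro r hr hrr hball
    have hfin : μ (Metric.ball p r) ≠ ⊤ := hballfin p r hr hrr
    have h1 : (M / 2) ^ 2 * (κ * r ^ n) ≤ (M / 2) ^ 2 * (μ (Metric.ball p r)).toReal :=
      mul_le_mul_of_nonneg_left (hnoncollapsed p r hr hrr) (sq_nonneg _)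
    have h2 : (M / 2) ^ 2 * (μ (Metric.ball p r)).toReal
        = ∫ _ in Metric.ball p r, (M / 2) ^ 2 ∂μ := by
      rw [setIntegral_const, smul_eq_mul, mul_comm]; rfl
    have h3 : ∫ _ in Metric.ball p r, (M / 2) ^ 2 ∂μ ≤ ∫ q in Metric.ball p r, S q ^ 2 ∂μ := by
      refine setIntegral_mono_on (integrableOn_const hfin)
        hint.integrableOn measurableSet_ball ?_
      intro q hq
      have := hball q hq
      have h4 : 0 ≤ M / 2 := by linarith
      exact pow_le_pow_left₀ h4 this 2
    have h4 : ∫ q in Metric.ball p r, S q ^ 2 ∂μ ≤ ∫ q, S q ^ 2 ∂μ :=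
      setIntegral_le_integral hint (Filter.Eventually.of_forall fun q => sq_nonneg _)
    linarith
  by_cases hc : 0 < C₀ ∧ M / (2 * C₀) < r₀
  · -- Case 1 : interior scale
    obtain ⟨hC₀pos, hrlt⟩ := hc
    have hrpos : 0 < M / (2 * C₀) := by positivity
    have hball : ∀ q ∈ Metric.ball p (M / (2 * C₀)), M / 2 ≤ S q := by
      intro q hq
      rw [Metric.mem_ball] at hq
      have h1 := hgrad p q
      have h2 : dist p q < M / (2 * C₀) := by rwa [dist_comm]
      have h3 : C₀ * dist p q ≤ C₀ * (M / (2 * C₀)) :=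
        mul_le_mul_of_nonneg_left h2.le hC₀
      have h4 : C₀ * (M / (2 * C₀)) = M / 2 := by field_simp
      have h5 : S p - S q ≤ |S p - S q| := le_abs_self _
      rw [← hM] at *
      linarith
    have hkey := claim _ hrpos hrlt hball
    have hexp : (M / (2 * C₀)) ^ n = M ^ n / (2 * C₀) ^ n := div_pow _ _ _
    have hmpos : 0 < m := lt_of_lt_of_le (by positivity) hkey
    -- κ * M ^ (n+2) ≤ 2 ^ (n+2) * C₀ ^ n * m
    have hkey2 : κ * M ^ (n + 2) ≤ 2 ^ (n + 2) * C₀ ^ n * m := by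
      have h2C : (0:ℝ) < (2 * C₀) ^ n := by positivity
      have e1 : (M / 2) ^ 2 * (κ * (M / (2 * C₀)) ^ n)
          = κ * M ^ (n + 2) / (4 * (2 * C₀) ^ n) := by
        have hC0ne : C₀ ≠ 0 := hC₀pos.ne'
        rw [pow_add, div_pow, mul_pow, div_pow]; field_simp; ring
      rw [e1, div_le_iff₀ (by positivity)] at hkey
      calc κ * M ^ (n+2) ≤ m * (4 * (2 * C₀) ^ n) := hkey
        _ = 2 ^ (n + 2) * C₀ ^ n * m := by rw [mul_pow, pow_add]; ring
    -- raise to power 1/(N+2)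
    have hMn2 : M ^ (n + 2) = M ^ (N + 2 : ℝ) := by
      rw [← Real.rpow_natCast M (n + 2)]; push_cast; ring_nf; rfl
    have hstep : M ≤ (2 ^ (n + 2) * C₀ ^ n * m / κ) ^ ((1:ℝ) / (N + 2)) := by
      have h1 : M ^ (n + 2) ≤ 2 ^ (n + 2) * C₀ ^ n * m / κ := by
        rw [le_div_iff₀ hκ, mul_comm _ κ]; exact hkey2
      rw [hMn2] at h1
      have h2 := Real.rpow_le_rpow (by positivity) h1 (by positivity : (0:ℝ) ≤ 1 / (N + 2))
      rwa [← Real.rpow_mul hMpos.le, mul_one_div,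
        div_self hN2.ne', Real.rpow_one] at h2
    refine le_trans hstep (le_trans ?_
      (mul_le_mul_of_nonneg_right (le_max_left _ _) (Real.rpow_nonneg hm0 _)))
    have hrw : (2 ^ (n + 2) * C₀ ^ n * m / κ) ^ ((1:ℝ) / (N + 2))
        = 2 * C₀ ^ (N / (N + 2)) / κ ^ ((1:ℝ) / (N + 2)) * m ^ ((1:ℝ) / (N + 2)) := by
      rw [Real.div_rpow (by positivity) hκ.le, Real.mul_rpow (by positivity) hmpos.le,
        Real.mul_rpow (by positivity) (by positivity),
        ← Real.rpow_natCast (2:ℝ) (n+2), ← Real.rpow_natCast C₀ n,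
        ← Real.rpow_mul (by norm_num : (0:ℝ) ≤ 2), ← Real.rpow_mul hC₀]
      push_cast
      rw [show ((n:ℝ) + 2) * (1 / (N + 2)) = 1 by rw [hN]; field_simp,
        show (n:ℝ) * (1 / (N + 2)) = N / (N + 2) by rw [hN]; ring,
        Real.rpow_one]
      ring
    rw [hrw]
  · -- Case 2 : boundary scale
    push_neg at hc
    have hball : ∀ r : ℝ, r < r₀ → ∀ q ∈ Metric.ball p r, M / 2 ≤ S q := by
      intro r hrr q hq
      rw [Metric.mem_ball] at hq
      have h1 := hgrad p q
      have h5 : S p - S q ≤ |S p - S q| := le_abs_self _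
      have hd : dist p q < r₀ := by rw [dist_comm]; linarith
      rcases eq_or_lt_of_le hC₀ with hCz | hCpos
      · rw [← hCz] at h1
        rw [← hM] at *
        simp only [zero_mul] at h1
        have := abs_nonneg (S p - S q)
        linarith
      · have h2 := hc hCpos
        have h3 : C₀ * dist p q ≤ C₀ * r₀ := mul_le_mul_of_nonneg_left hd.le hC₀
        have h4 : C₀ * r₀ ≤ C₀ * (M / (2 * C₀)) := mul_le_mul_of_nonneg_left h2 hC₀
        have h6 : C₀ * (M / (2 * C₀)) = M / 2 := by field_simp
        rw [← hM] at *
        linarith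
    -- pass to the limit r → r₀
    have hkey : (M / 2) ^ 2 * (κ * r₀ ^ n) ≤ m := by
      have hcont : Continuous (fun r : ℝ => (M / 2) ^ 2 * (κ * r ^ n)) :=
        continuous_const.mul (continuous_const.mul (continuous_pow n))
      have htend : Filter.Tendsto (fun r : ℝ => (M / 2) ^ 2 * (κ * r ^ n))
          (nhdsWithin r₀ (Set.Iio r₀)) (nhds ((M / 2) ^ 2 * (κ * r₀ ^ n))) :=
        (hcont.tendsto r₀).mono_left nhdsWithin_le_nhds
      refine le_of_tendsto htend ?_
      filter_upwards [Ioo_mem_nhdsLT_of_mem (⟨hr₀, le_refl r₀⟩ : r₀ ∈ Set.Ioc 0 r₀)]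
        with r hr
      exact claim r hr.1 hr.2 (hball r hr.2)
    have hK : (0:ℝ) < κ * r₀ ^ n := by positivity
    have hmpos : 0 < m := lt_of_lt_of_le (by positivity) hkey
    have hsqK : Real.sqrt (κ * r₀ ^ n) > 0 := Real.sqrt_pos.mpr hK
    have hstep : M ≤ 2 * Real.sqrt m / Real.sqrt (κ * r₀ ^ n) := by
      have hsq : M ^ 2 ≤ (2 * Real.sqrt m / Real.sqrt (κ * r₀ ^ n)) ^ 2 := by
        rw [div_pow, mul_pow, Real.sq_sqrt hm0, Real.sq_sqrt hK.le,
          le_div_iff₀ hK]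
        nlinarith [hkey]
      calc M = Real.sqrt (M ^ 2) := (Real.sqrt_sq hM0).symm
        _ ≤ Real.sqrt ((2 * Real.sqrt m / Real.sqrt (κ * r₀ ^ n)) ^ 2) :=
            Real.sqrt_le_sqrt hsq
        _ = 2 * Real.sqrt m / Real.sqrt (κ * r₀ ^ n) := Real.sqrt_sq (by positivity)
    refine le_trans hstep (le_trans ?_
      (mul_le_mul_of_nonneg_right (le_max_right _ _) (Real.rpow_nonneg hm0 _)))
    have hrw : 2 ^ ((N + 2) / 2) * m ^ (N / (2 * (N + 2))) / Real.sqrt (κ * r₀ ^ n)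
          * m ^ ((1:ℝ) / (N + 2))
        = 2 ^ ((N + 2) / 2) * Real.sqrt m / Real.sqrt (κ * r₀ ^ n) := by
      rw [div_mul_eq_mul_div, mul_assoc, ← Real.rpow_add hmpos,
        show N / (2 * (N + 2)) + 1 / (N + 2) = 1 / 2 by field_simp,
        ← Real.sqrt_eq_rpow]
    rw [hrw]
    have h2le : (2:ℝ) ≤ 2 ^ ((N + 2) / 2) := by
      nth_rewrite 1 [show (2:ℝ) = 2 ^ (1:ℝ) by norm_num]
      apply Real.rpow_le_rpow_left_iff (by norm_num : (1:ℝ) < 2) |>.mpr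
      linarith
    gcongr
end

section
/- Let F: L → X be a totally real immersion into a Kähler manifold. The normal component of the ambient covariant derivative of the normal frame N_p = π_⊥(JF_p) in the direction F_j is given by π_⊥(∇̄_{F_j} N_p) = ( ω_p{}^r h_{qjr} η^{qs} − ω_q{}^r h_{rjp} η^{qs} + Γ_{jp}^s ) N_s, where Γ_{jp}^s are the Christoffel symbols of the induced metric g. -/
open scoped RealInnerProductSpace

lemma aux_inner_span_eq_zero {W : Type*} [NormedAddCommGroup W] [InnerProductSpace ℝ W]
    {ι : Type*} (v : ι → W) (x : W) (hx : x ∈ Submodule.span ℝ (Set.range v))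
    (h : ∀ i, ⟪v i, x⟫ = 0) : x = 0 := by
  have hx' : ∀ y ∈ Submodule.span ℝ (Set.range v), ⟪y, x⟫ = 0 := by
    intro y hy
    induction hy using Submodule.span_induction with
    | mem y hy => obtain ⟨i, rfl⟩ := hy; exact h i
    | zero => simp
    | add a b _ _ ha hb => simp [inner_add_left, ha, hb]
    | smul a c _ hc => simp [inner_smul_left, hc]
  exact inner_self_eq_zero.mp (hx' x hx)

lemma gram_det_isUnit {W : Type*} [NormedAddCommGroup W] [InnerProductSpace ℝ W] {n : ℕ}
    (v : Fin n → W) (hv : LinearIndependent ℝ v)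
    (G : Matrix (Fin n) (Fin n) ℝ) (hG : ∀ i j, G i j = ⟪v i, v j⟫) :
    IsUnit G.det := by
  have hnd : G.Nondegenerate := by
    suffices key : ∀ c : Fin n → ℝ, dotProduct c (G.mulVec c) = 0 → c = 0 from
      Matrix.nondegenerate_def.mpr ⟨fun c hc => key c (hc c), fun c hc => key c (hc c)⟩
    intro c hc
    have h0 : ∑ i, c i • v i = 0 := by
      have h1 := hc
      have h2 : ⟪∑ i, c i • v i, ∑ j, c j • v j⟫ = 0 := by
        rw [sum_inner]
        rw [show (0:ℝ) = ∑ i, c i * (G.mulVec c) i from (by simpa [dotProduct] using h1.symm)]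
        refine Finset.sum_congr rfl fun i _ => ?_
        simp only [inner_smul_left, RCLike.conj_to_real, inner_sum, inner_smul_right,
          Matrix.mulVec, dotProduct, Finset.mul_sum, hG]
        refine Finset.sum_congr rfl fun j _ => ?_
        ring
      exact inner_self_eq_zero.mp h2
    funext i
    exact Fintype.linearIndependent_iff.mp hv c h0 i
  exact isUnit_iff_ne_zero.mpr (Matrix.nondegenerate_iff_det_ne_zero.mp hnd)

/-- **Normal components of `∇̄_{F_j} N_p` (Proposition 2.4 / `normal`).**
Let `F : L → X` be a totally real immersion into a Kähler manifold.  At a point we model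
`T_pX` by a real inner product space `W` of dimension `2n` with orthogonal complex
structure `J`; `F i` is the coordinate tangent frame spanning `T`, `N i = π_⊥(J(F i))`
the normal frame, `g, ω, η` the associated matrices, `DF j k` the ambient covariant
derivative `∇̄_{F_j}F_k`, `h i j k = −⟪N i, ∇̄_{F_j}F_k⟫` the second fundamental form
components, and `Γ j p s = Γ_{jp}^s` the Christoffel symbols of the induced metric `g`
(characterized by `Γ_{jp}^s = g^{sq}⟪∇̄_{F_j}F_p, F_q⟫`).  The covariant derivative of
the normal frame is `∇̄_{F_j}N_p = J(∇̄_{F_j}F_p) − u − ω_p{}^r ∇̄_{F_j}F_r` for a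
tangential vector `u` (coming from the derivative of the coefficients `ω_p{}^r`).
Then the normal projection satisfies
`π_⊥(∇̄_{F_j} N_p) = (ω_p{}^r h_{qjr} η^{qs} − ω_q{}^r h_{rjp} η^{qs} + Γ_{jp}^s) N_s`. -/
theorem normal_component_of_derivative_of_normal_frame
    {W : Type*} [NormedAddCommGroup W] [InnerProductSpace ℝ W] [FiniteDimensional ℝ W]
    {n : ℕ} (hrank : Module.finrank ℝ W = 2 * n)
    (J : W →ₗ[ℝ] W)
    (hJ2 : ∀ v, J (J v) = -v)
    (hJorth : ∀ v w, ⟪J v, J w⟫ = ⟪v, w⟫)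
    (F : Fin n → W) (hF : LinearIndependent ℝ F)
    (T : Submodule ℝ W) (hT : T = Submodule.span ℝ (Set.range F))
    (htotallyReal : T ⊓ T.map J = ⊥)
    (N : Fin n → W)
    (hN : ∀ i, N i = J (F i) - (T.orthogonalProjectionOnto (J (F i)) : W))
    (g ω η : Matrix (Fin n) (Fin n) ℝ)
    (hg : ∀ i j, g i j = ⟪F i, F j⟫)
    (hω : ∀ i j, ω i j = ⟪J (F i), F j⟫)
    (hη : ∀ i j, η i j = ⟪N i, N j⟫)
    (DF : Fin n → Fin n → W)
    (h : Fin n → Fin n → Fin n → ℝ)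
    (hh : ∀ i j k, h i j k = -⟪N i, DF j k⟫)
    (Γ : Fin n → Fin n → Fin n → ℝ)
    (hΓ : ∀ j p s, Γ j p s = ∑ q, ⟪DF j p, F q⟫ * g⁻¹ q s)
    (DN : Fin n → Fin n → W)
    (hDN : ∀ j p, ∃ u ∈ T,
      DN j p = J (DF j p) - u - ∑ r, (∑ q, ω p q * g⁻¹ q r) • DF j r) :
    ∀ j p, DN j p - (T.orthogonalProjectionOnto (DN j p) : W)
      = ∑ s, ((∑ q, (∑ r, (∑ m, ω p m * g⁻¹ m r) * h q j r) * η⁻¹ q s)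
            - (∑ q, (∑ r, (∑ m, ω q m * g⁻¹ m r) * h r j p) * η⁻¹ q s)
            + Γ j p s) • N s := by
  -- basic facts
  have hgdet : IsUnit g.det := gram_det_isUnit F hF g hg
  have hgsymm : ∀ i j, g i j = g j i := fun i j => by rw [hg, hg, real_inner_comm]
  have hginv_symm : ∀ i j, g⁻¹ i j = g⁻¹ j i := by
    have hgt : g.transpose = g := by ext i j; exact hgsymm j i
    intro i j
    calc g⁻¹ i j = (g⁻¹).transpose j i := (Matrix.transpose_apply _ _ _).symm
    _ = (g.transpose)⁻¹ j i := by rw [Matrix.transpose_nonsing_inv]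
    _ = g⁻¹ j i := by rw [hgt]
  have hginv : ∀ t q, ∑ s, g⁻¹ t s * g s q = if t = q then 1 else 0 := by
    intro t q
    have := Matrix.nonsing_inv_mul g hgdet
    have h2 := congrFun (congrFun this t) q
    rw [Matrix.mul_apply] at h2
    rw [h2, Matrix.one_apply]
  have hJinner : ∀ v w, ⟪v, J w⟫ = -⟪J v, w⟫ := by
    intro v w
    rw [← hJorth v (J w), hJ2, inner_neg_right]
  have hωanti : ∀ i j', ω i j' = -ω j' i := by
    intro i j'
    rw [hω, hω, real_inner_comm, hJinner]
  have hFT : ∀ i, F i ∈ T := by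
    intro i; rw [hT]; exact Submodule.subset_span ⟨i, rfl⟩
  have hNorth : ∀ i, N i ∈ Tᗮ := by
    intro i; rw [hN]; exact Submodule.sub_starProjection_mem_orthogonal _
  have hNT0 : ∀ i, ∀ x ∈ T, ⟪N i, x⟫ = 0 := by
    intro i x hx
    rw [real_inner_comm]
    exact (Submodule.mem_orthogonal T (N i)).mp (hNorth i) x hx
  -- tangent expansion
  have htan : ∀ x ∈ T, x = ∑ r, (∑ m, ⟪x, F m⟫ * g⁻¹ m r) • F r := by
    intro x hx
    rw [← sub_eq_zero]
    apply aux_inner_span_eq_zero F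
    · rw [← hT]
      exact Submodule.sub_mem _ hx
        (Submodule.sum_mem _ fun r _ => Submodule.smul_mem _ _ (hFT r))
    intro i
    rw [inner_sub_right, sub_eq_zero, inner_sum]
    have step : ∀ r, ⟪F i, (∑ m, ⟪x, F m⟫ * g⁻¹ m r) • F r⟫
        = ∑ m, ⟪x, F m⟫ * (g⁻¹ m r * g r i) := by
      intro r
      rw [real_inner_smul_right, ← hg, Finset.sum_mul, hgsymm i r]
      exact Finset.sum_congr rfl fun m _ => by ring
    rw [Finset.sum_congr rfl fun r _ => step r, Finset.sum_comm]
    have step2 : ∀ m, ∑ r, ⟪x, F m⟫ * (g⁻¹ m r * g r i)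
        = ⟪x, F m⟫ * (if m = i then 1 else 0) := by
      intro m
      rw [← Finset.mul_sum, hginv]
    rw [Finset.sum_congr rfl fun m _ => step2 m]
    simp [real_inner_comm]
  have hPJF : ∀ q', (T.orthogonalProjectionOnto (J (F q')) : W)
      = ∑ r, (∑ m, ω q' m * g⁻¹ m r) • F r := by
    intro q'
    have hPeq : (T.orthogonalProjectionOnto (J (F q')) : W) = J (F q') - N q' := by
      rw [hN q']; abel
    have hPmem : (T.orthogonalProjectionOnto (J (F q')) : W) ∈ T := SetLike.coe_mem _
    have h1 := htan _ hPmem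
    rw [h1]
    refine Finset.sum_congr rfl fun r _ => ?_
    congr 1
    refine Finset.sum_congr rfl fun m _ => ?_
    congr 1
    rw [hPeq, inner_sub_left, hNT0 q' (F m) (hFT m), hω]
    ring
  have hJF_decomp : ∀ r, J (F r) = N r + ∑ m, (∑ k, ω r k * g⁻¹ k m) • F m := by
    intro r
    rw [hN r, ← hPJF r]
    abel
  have hη_eq : ∀ q s, η q s = g q s - ∑ r, (∑ m, ω q m * g⁻¹ m r) * ω s r := by
    intro q s
    have h1 : η q s = ⟪N q, J (F s)⟫ := by
      rw [hη, hN s, inner_sub_right,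
        hNT0 q _ (SetLike.coe_mem (T.orthogonalProjectionOnto (J (F s)))), sub_zero]
    have h2 : N q = J (F q) - ∑ r, (∑ m, ω q m * g⁻¹ m r) • F r := by
      rw [hN q, hPJF q]
    rw [h1, h2, inner_sub_left, hJorth, ← hg, sum_inner]
    congr 1
    refine Finset.sum_congr rfl fun r _ => ?_
    rw [real_inner_smul_left]
    congr 1
    rw [real_inner_comm, hω]
  have hNlin : LinearIndependent ℝ N := by
    rw [Fintype.linearIndependent_iff]
    intro c hc i
    have hx : ∑ i, c i • F i ∈ T := Submodule.sum_mem _ fun i _ => Submodule.smul_mem _ _ (hFT i)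
    have hJx : J (∑ i, c i • F i) ∈ T := by
      have hJxT : J (∑ i, c i • F i) = ∑ i, c i • (T.orthogonalProjectionOnto (J (F i)) : W) := by
        rw [map_sum]
        calc ∑ i, J (c i • F i) = ∑ i, c i • J (F i) := by
              refine Finset.sum_congr rfl fun i _ => ?_
              rw [map_smul]
        _ = ∑ i, c i • ((T.orthogonalProjectionOnto (J (F i)) : W) + N i) := by
              refine Finset.sum_congr rfl fun i _ => ?_
              rw [hN i]; congr 1; abel
        _ = ∑ i, c i • (T.orthogonalProjectionOnto (J (F i)) : W) + ∑ i, c i • N i := by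
              rw [← Finset.sum_add_distrib]
              exact Finset.sum_congr rfl fun i _ => smul_add _ _ _
        _ = ∑ i, c i • (T.orthogonalProjectionOnto (J (F i)) : W) := by rw [hc, add_zero]
      rw [hJxT]
      exact Submodule.sum_mem _ fun i _ => Submodule.smul_mem _ _ (SetLike.coe_mem _)
    have hJx0 : J (∑ i, c i • F i) = 0 := by
      have hmm0 : J (∑ i, c i • F i) ∈ T ⊓ T.map J :=
        Submodule.mem_inf.mpr ⟨hJx, Submodule.mem_map_of_mem hx⟩
      rw [htotallyReal] at hmm0
      exact hmm0
    have hx0 : ∑ i, c i • F i = 0 := by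
      have := congrArg J hJx0
      rw [hJ2, map_zero, neg_eq_zero] at this
      exact this
    exact Fintype.linearIndependent_iff.mp hF c hx0 i
  have hηdet : IsUnit η.det := gram_det_isUnit N hNlin η hη
  have hηsymm : ∀ i j, η i j = η j i := fun i j => by rw [hη, hη, real_inner_comm]
  have hηinv : ∀ t q, ∑ s, η⁻¹ t s * η s q = if t = q then 1 else 0 := by
    intro t q
    have := Matrix.nonsing_inv_mul η hηdet
    have h2 := congrFun (congrFun this t) q
    rw [Matrix.mul_apply] at h2
    rw [h2, Matrix.one_apply]
  have hspanN : Submodule.span ℝ (Set.range N) = Tᗮ := by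
    have hle : Submodule.span ℝ (Set.range N) ≤ Tᗮ := by
      rw [Submodule.span_le]
      rintro x ⟨i, rfl⟩
      exact hNorth i
    have hfT : Module.finrank ℝ T = n := by
      rw [hT, finrank_span_eq_card hF, Fintype.card_fin]
    have hfTo : Module.finrank ℝ Tᗮ = n := by
      have := Submodule.finrank_add_finrank_orthogonal (K := T)
      rw [hfT, hrank] at this
      omega
    have hfN : Module.finrank ℝ (Submodule.span ℝ (Set.range N)) = n := by
      rw [finrank_span_eq_card hNlin, Fintype.card_fin]
    exact Submodule.eq_of_le_of_finrank_le hle (by rw [hfTo, hfN])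
  intro j p
  obtain ⟨u, huT, hDNe⟩ := hDN j p
  rw [← sub_eq_zero]
  apply aux_inner_span_eq_zero N
  · rw [hspanN]
    exact Submodule.sub_mem _ (Submodule.sub_starProjection_mem_orthogonal _)
      (Submodule.sum_mem _ fun s _ => Submodule.smul_mem _ _ (hNorth s))
  intro q
  rw [inner_sub_right, sub_eq_zero]
  have hNDF : ∀ a b c', ⟪N a, DF b c'⟫ = -h a b c' := fun a b c' => by rw [hh]; ring
  have hvinner : ⟪N q, DN j p - (T.orthogonalProjectionOnto (DN j p) : W)⟫ = ⟪N q, DN j p⟫ := by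
    rw [inner_sub_right, hNT0 q _ (SetLike.coe_mem _), sub_zero]
  have hL1 : ⟪N q, DN j p⟫ = ⟪N q, J (DF j p)⟫
      + ∑ r, (∑ m, ω p m * g⁻¹ m r) * h q j r := by
    rw [hDNe, inner_sub_right, inner_sub_right, hNT0 q u huT, sub_zero, inner_sum]
    have step : ∀ r, ⟪N q, (∑ m, ω p m * g⁻¹ m r) • DF j r⟫
        = -((∑ m, ω p m * g⁻¹ m r) * h q j r) := by
      intro r; rw [real_inner_smul_right, hNDF]; ring
    rw [Finset.sum_congr rfl fun r _ => step r, Finset.sum_neg_distrib, sub_neg_eq_add]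
  have hJNq : J (N q) = -F q - ∑ r, (∑ m, ω q m * g⁻¹ m r) • J (F r) := by
    rw [hN q, map_sub, hJ2, hPJF q, map_sum]
    simp
  have hJD : ⟪N q, J (DF j p)⟫ = ⟪F q, DF j p⟫
      + ∑ r, (∑ m, ω q m * g⁻¹ m r) * ⟪J (F r), DF j p⟫ := by
    rw [hJinner (N q) (DF j p), hJNq, inner_sub_left, inner_neg_left, sum_inner]
    rw [Finset.sum_congr rfl fun r _ => real_inner_smul_left (J (F r)) (DF j p) _]
    ring
  have hJFrD : ∀ r, ⟪J (F r), DF j p⟫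
      = -h r j p + ∑ m, (∑ k, ω r k * g⁻¹ k m) * ⟪F m, DF j p⟫ := by
    intro r
    rw [hJF_decomp r, inner_add_left, sum_inner, hNDF r j p]
    congr 1
    exact Finset.sum_congr rfl fun m _ => real_inner_smul_left _ _ _
  have hR : ⟪N q, ∑ s, ((∑ q', (∑ r, (∑ m, ω p m * g⁻¹ m r) * h q' j r) * η⁻¹ q' s)
            - (∑ q', (∑ r, (∑ m, ω q' m * g⁻¹ m r) * h r j p) * η⁻¹ q' s)
            + Γ j p s) • N s⟫
      = ∑ s, ((∑ q', (∑ r, (∑ m, ω p m * g⁻¹ m r) * h q' j r) * η⁻¹ q' s)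
            - (∑ q', (∑ r, (∑ m, ω q' m * g⁻¹ m r) * h r j p) * η⁻¹ q' s)
            + Γ j p s) * η q s := by
    rw [inner_sum]
    refine Finset.sum_congr rfl fun s _ => ?_
    rw [real_inner_smul_right, ← hη]
  have hdual : ∀ (a : Fin n → ℝ), ∑ s, (∑ q', a q' * η⁻¹ q' s) * η q s = a q := by
    intro a
    calc ∑ s, (∑ q', a q' * η⁻¹ q' s) * η q s
        = ∑ s, ∑ q', a q' * (η⁻¹ q' s * η s q) := by
          refine Finset.sum_congr rfl fun s _ => ?_
          rw [Finset.sum_mul, hηsymm q s]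
          exact Finset.sum_congr rfl fun q' _ => by ring
      _ = ∑ q', a q' * ∑ s, η⁻¹ q' s * η s q := by
          rw [Finset.sum_comm]
          exact Finset.sum_congr rfl fun q' _ => (Finset.mul_sum _ _ _).symm
      _ = ∑ q', a q' * (if q' = q then 1 else 0) :=
          Finset.sum_congr rfl fun q' _ => by rw [hηinv]
      _ = a q := by simp
  have hinner_claim : ∀ r, ∑ s, (∑ t, ⟪DF j p, F t⟫ * g⁻¹ t s) * ω s r
      = -∑ m, (∑ k, ω r k * g⁻¹ k m) * ⟪F m, DF j p⟫ := by
    intro r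
    calc ∑ s, (∑ t, ⟪DF j p, F t⟫ * g⁻¹ t s) * ω s r
        = ∑ s, ∑ t, -(ω r s * (g⁻¹ s t * ⟪F t, DF j p⟫)) := by
          refine Finset.sum_congr rfl fun s _ => ?_
          rw [Finset.sum_mul]
          refine Finset.sum_congr rfl fun t _ => ?_
          rw [hωanti s r, hginv_symm t s, real_inner_comm (DF j p) (F t)]
          ring
      _ = ∑ t, ∑ s, -(ω r s * (g⁻¹ s t * ⟪F t, DF j p⟫)) := Finset.sum_comm
      _ = -∑ m, (∑ k, ω r k * g⁻¹ k m) * ⟪F m, DF j p⟫ := by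
          rw [← Finset.sum_neg_distrib]
          refine Finset.sum_congr rfl fun m _ => ?_
          rw [Finset.sum_mul, ← Finset.sum_neg_distrib]
          exact Finset.sum_congr rfl fun k _ => by ring
  have hG : ∑ s, Γ j p s * η q s
      = ⟪F q, DF j p⟫ + ∑ r, (∑ m, ω q m * g⁻¹ m r)
          * ∑ m, (∑ k, ω r k * g⁻¹ k m) * ⟪F m, DF j p⟫ := by
    calc ∑ s, Γ j p s * η q s
        = ∑ s, ((∑ t, ⟪DF j p, F t⟫ * g⁻¹ t s) * g q s
            - ∑ r, (∑ m, ω q m * g⁻¹ m r) * ((∑ t, ⟪DF j p, F t⟫ * g⁻¹ t s) * ω s r)) := by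
          refine Finset.sum_congr rfl fun s _ => ?_
          rw [hΓ, hη_eq, mul_sub, Finset.mul_sum]
          congr 1
          exact Finset.sum_congr rfl fun r _ => by ring
      _ = (∑ s, (∑ t, ⟪DF j p, F t⟫ * g⁻¹ t s) * g q s)
            - ∑ s, ∑ r, (∑ m, ω q m * g⁻¹ m r) * ((∑ t, ⟪DF j p, F t⟫ * g⁻¹ t s) * ω s r) :=
          Finset.sum_sub_distrib _ _
      _ = ⟪F q, DF j p⟫ + ∑ r, (∑ m, ω q m * g⁻¹ m r)
            * ∑ m, (∑ k, ω r k * g⁻¹ k m) * ⟪F m, DF j p⟫ := by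
          rw [sub_eq_add_neg]
          congr 1
          · calc ∑ s, (∑ t, ⟪DF j p, F t⟫ * g⁻¹ t s) * g q s
                = ∑ s, ∑ t, ⟪DF j p, F t⟫ * (g⁻¹ t s * g s q) := by
                  refine Finset.sum_congr rfl fun s _ => ?_
                  rw [Finset.sum_mul, hgsymm q s]
                  exact Finset.sum_congr rfl fun t _ => by ring
              _ = ∑ t, ⟪DF j p, F t⟫ * ∑ s, g⁻¹ t s * g s q := by
                  rw [Finset.sum_comm]
                  exact Finset.sum_congr rfl fun t _ => (Finset.mul_sum _ _ _).symm
              _ = ∑ t, ⟪DF j p, F t⟫ * (if t = q then 1 else 0) :=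
                  Finset.sum_congr rfl fun t _ => by rw [hginv]
              _ = ⟪F q, DF j p⟫ := by simp [real_inner_comm]
          · calc -∑ s, ∑ r, (∑ m, ω q m * g⁻¹ m r)
                  * ((∑ t, ⟪DF j p, F t⟫ * g⁻¹ t s) * ω s r)
                = -∑ r, (∑ m, ω q m * g⁻¹ m r)
                  * ∑ s, (∑ t, ⟪DF j p, F t⟫ * g⁻¹ t s) * ω s r := by
                  rw [Finset.sum_comm]
                  congr 1
                  exact Finset.sum_congr rfl fun r _ => (Finset.mul_sum _ _ _).symm
            _ = ∑ r, (∑ m, ω q m * g⁻¹ m r)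
                  * (-∑ s, (∑ t, ⟪DF j p, F t⟫ * g⁻¹ t s) * ω s r) := by
                  rw [← Finset.sum_neg_distrib]
                  exact Finset.sum_congr rfl fun r _ => by ring
            _ = ∑ r, (∑ m, ω q m * g⁻¹ m r)
                  * ∑ m, (∑ k, ω r k * g⁻¹ k m) * ⟪F m, DF j p⟫ := by
                  refine Finset.sum_congr rfl fun r _ => ?_
                  rw [hinner_claim r, neg_neg]
  have hmid : ∑ r, (∑ m, ω q m * g⁻¹ m r) * ⟪J (F r), DF j p⟫
      = -∑ r, (∑ m, ω q m * g⁻¹ m r) * h r j p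
        + ∑ r, (∑ m, ω q m * g⁻¹ m r)
          * ∑ m, (∑ k, ω r k * g⁻¹ k m) * ⟪F m, DF j p⟫ := by
    rw [← Finset.sum_neg_distrib, ← Finset.sum_add_distrib]
    refine Finset.sum_congr rfl fun r _ => ?_
    rw [hJFrD r]; ring
  have hRHS : ∑ s, ((∑ q', (∑ r, (∑ m, ω p m * g⁻¹ m r) * h q' j r) * η⁻¹ q' s)
            - (∑ q', (∑ r, (∑ m, ω q' m * g⁻¹ m r) * h r j p) * η⁻¹ q' s)
            + Γ j p s) * η q s
      = (∑ r, (∑ m, ω p m * g⁻¹ m r) * h q j r)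
        - (∑ r, (∑ m, ω q m * g⁻¹ m r) * h r j p)
        + (⟪F q, DF j p⟫ + ∑ r, (∑ m, ω q m * g⁻¹ m r)
            * ∑ m, (∑ k, ω r k * g⁻¹ k m) * ⟪F m, DF j p⟫) := by
    calc ∑ s, ((∑ q', (∑ r, (∑ m, ω p m * g⁻¹ m r) * h q' j r) * η⁻¹ q' s)
            - (∑ q', (∑ r, (∑ m, ω q' m * g⁻¹ m r) * h r j p) * η⁻¹ q' s)
            + Γ j p s) * η q s
        = (∑ s, (∑ q', (∑ r, (∑ m, ω p m * g⁻¹ m r) * h q' j r) * η⁻¹ q' s) * η q s)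
          - (∑ s, (∑ q', (∑ r, (∑ m, ω q' m * g⁻¹ m r) * h r j p) * η⁻¹ q' s) * η q s)
          + ∑ s, Γ j p s * η q s := by
          rw [← Finset.sum_sub_distrib, ← Finset.sum_add_distrib]
          exact Finset.sum_congr rfl fun s _ => by ring
      _ = (∑ r, (∑ m, ω p m * g⁻¹ m r) * h q j r)
          - (∑ r, (∑ m, ω q m * g⁻¹ m r) * h r j p)
          + (⟪F q, DF j p⟫ + ∑ r, (∑ m, ω q m * g⁻¹ m r)
              * ∑ m, (∑ k, ω r k * g⁻¹ k m) * ⟪F m, DF j p⟫) := by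
          rw [hdual (fun q' => ∑ r, (∑ m, ω p m * g⁻¹ m r) * h q' j r),
            hdual (fun q' => ∑ r, (∑ m, ω q' m * g⁻¹ m r) * h r j p), hG]
  rw [hvinner, hL1, hJD, hmid, hR, hRHS]
  ring
end

section
/- Let F: L → X be a totally real immersion into a Kähler manifold. The difference between the 1-form ξ = g^{kj} h_{jik} dx^i and the Maslov 1-form ξ_J = η^{jk} h_{kij} dx^i is given explicitly by ξ − ξ_J = η^{js} ω_{sp} g^{pq} ω_{qr} g^{rk} h_{jik} dx^i. In particular the difference is quadratic in ω with one second fundamental form factor. -/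
open scoped RealInnerProductSpace

lemma gram_isUnit {W : Type*} [NormedAddCommGroup W] [InnerProductSpace ℝ W]
    {n : ℕ} {v : Fin n → W} (hv : LinearIndependent ℝ v)
    {G : Matrix (Fin n) (Fin n) ℝ} (hG : ∀ i j, G i j = ⟪v i, v j⟫) : IsUnit G := by
  refine Matrix.mulVec_injective_iff_isUnit.mp ?_
  have key : ∀ c : Fin n → ℝ, G.mulVec c = 0 → c = 0 := by
    intro c hc
    have hw : ∀ i, ⟪v i, ∑ j, c j • v j⟫ = 0 := by
      intro i
      have := congrFun hc i
      simpa [Matrix.mulVec, dotProduct, hG, inner_sum, real_inner_smul_right,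
        mul_comm] using this
    have hw0 : (∑ j, c j • v j) = 0 := by
      have h2 : ⟪∑ j, c j • v j, ∑ j, c j • v j⟫ = (0 : ℝ) := by
        rw [sum_inner]
        simp [real_inner_smul_left, hw]
      exact inner_self_eq_zero.mp h2
    funext j
    exact Fintype.linearIndependent_iff.mp hv c hw0 j
  intro a b hab
  have h0 : G.mulVec (a - b) = 0 := by rw [Matrix.mulVec_sub, hab, sub_self]
  have := congrFun (key _ h0)
  funext j
  simpa [sub_eq_zero] using this j

/-- **The error term `ξ − ξ_J` (equation (2.9) / `error`).**
Let `F : L → X` be a totally real immersion into a Kähler manifold.  At a point we model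
`T_pX` by a real inner product space `W` of dimension `2n` with orthogonal complex
structure `J`; `F i` is the coordinate tangent frame spanning `T`,
`N i = π_⊥(J (F i))` the normal frame, `g i j = ⟪F i, F j⟫`, `ω i j = ⟪J(F i), F j⟫`,
`η i j = ⟪N i, N j⟫` (with inverse `η⁻¹`), and
`h i j k = −⟪N i, ∇̄_{F_j}F_k⟫` the second fundamental form components, where
`DF j k` records `∇̄_{F_j}F_k`.  Then the difference between the trace
`ξ_i = g^{kj} h_{jik}` and the Maslov form `(ξ_J)_i = η^{jk} h_{kij}` is given by
`ξ − ξ_J = η^{js} ω_{sp} g^{pq} ω_{qr} g^{rk} h_{jik} dxⁱ`;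
in particular the difference is quadratic in `ω` with one second fundamental form
factor. -/
theorem xi_sub_xiJ_error_term
    {W : Type*} [NormedAddCommGroup W] [InnerProductSpace ℝ W] [FiniteDimensional ℝ W]
    {n : ℕ} (hrank : Module.finrank ℝ W = 2 * n)
    (J : W →ₗ[ℝ] W)
    (hJ2 : ∀ v, J (J v) = -v)
    (hJorth : ∀ v w, ⟪J v, J w⟫ = ⟪v, w⟫)
    (F : Fin n → W) (hF : LinearIndependent ℝ F)
    (T : Submodule ℝ W) (hT : T = Submodule.span ℝ (Set.range F))
    (htotallyReal : T ⊓ T.map J = ⊥)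
    (N : Fin n → W)
    (hN : ∀ i, N i = J (F i) - (Submodule.orthogonalProjectionOnto T (J (F i)) : W))
    (g ω η : Matrix (Fin n) (Fin n) ℝ)
    (hg : ∀ i j, g i j = ⟪F i, F j⟫)
    (hω : ∀ i j, ω i j = ⟪J (F i), F j⟫)
    (hη : ∀ i j, η i j = ⟪N i, N j⟫)
    (DF : Fin n → Fin n → W)
    (h : Fin n → Fin n → Fin n → ℝ)
    (hh : ∀ i j k, h i j k = -⟪N i, DF j k⟫) :
    ∀ i, (∑ k, ∑ j, g⁻¹ k j * h j i k) - (∑ j, ∑ k, η⁻¹ j k * h k i j)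
      = ∑ j, ∑ s, ∑ p, ∑ q, ∑ r, ∑ k,
          η⁻¹ j s * ω s p * g⁻¹ p q * ω q r * g⁻¹ r k * h j i k := by
  -- basic facts
  have hFT : ∀ i, F i ∈ T := by
    intro i; rw [hT]; exact Submodule.subset_span ⟨i, rfl⟩
  have hgU : IsUnit g := gram_isUnit hF hg
  have hgdet : IsUnit g.det := (Matrix.isUnit_iff_isUnit_det g).mp hgU
  -- ω is antisymmetric
  have hωa : ∀ a b, ω b a = -ω a b := by
    intro a b
    rw [hω, hω]
    rw [← hJorth (J (F b)) (F a), hJ2]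
    simp [real_inner_comm (J (F a)) (F b), inner_neg_left]
  -- N i is orthogonal to T
  have hNperp : ∀ i, N i ∈ Tᗮ := by
    intro i; rw [hN]; exact Submodule.sub_starProjection_mem_orthogonal (K := T) _
  -- the projection of J (F i) onto T
  set u : Fin n → W := fun i => (Submodule.orthogonalProjectionOnto T (J (F i)) : W) with hu_def
  have huT : ∀ i, u i ∈ T := fun i => (Submodule.orthogonalProjectionOnto T (J (F i))).2
  have hu : ∀ i, u i = ∑ p, (ω * g⁻¹) i p • F p := by
    intro i
    have hdT : u i - ∑ p, (ω * g⁻¹) i p • F p ∈ T :=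
      Submodule.sub_mem T (huT i) (Submodule.sum_mem T fun p _ => Submodule.smul_mem T _ (hFT p))
    have hinner : ∀ q, ⟪u i - ∑ p, (ω * g⁻¹) i p • F p, F q⟫ = 0 := by
      intro q
      have h1 : ⟪u i, F q⟫ = ω i q := by
        have h2 : ⟪J (F i) - u i, F q⟫ = 0 :=
          Submodule.starProjection_inner_eq_zero (K := T) (J (F i)) (F q) (hFT q)
        rw [inner_sub_left, sub_eq_zero] at h2
        rw [← h2, hω]
      have h3 : ⟪∑ p, (ω * g⁻¹) i p • F p, F q⟫ = ω i q := by
        rw [sum_inner]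
        have : ∀ p, ⟪(ω * g⁻¹) i p • F p, F q⟫ = (ω * g⁻¹) i p * g p q := by
          intro p; rw [real_inner_smul_left, hg]
        rw [Finset.sum_congr rfl fun p _ => this p]
        have : (∑ p, (ω * g⁻¹) i p * g p q) = (ω * g⁻¹ * g) i q := by
          rw [Matrix.mul_apply]
        rw [this, Matrix.mul_assoc, Matrix.nonsing_inv_mul g hgdet, Matrix.mul_one]
      rw [inner_sub_left, h1, h3, sub_self]
    have hdperp : u i - ∑ p, (ω * g⁻¹) i p • F p ∈ Tᗮ := by
      rw [hT]
      intro x hx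
      induction hx using Submodule.span_induction with
      | mem x hx =>
          obtain ⟨q, rfl⟩ := hx
          rw [real_inner_comm]; exact hinner q
      | zero => simp
      | add x y _ _ hx hy => rw [inner_add_left, hx, hy, add_zero]
      | smul c x _ hx => rw [inner_smul_left, hx, mul_zero]
    have := inner_self_eq_zero.mp (hdperp _ hdT)
    rwa [sub_eq_zero] at this
  -- η = g + ω g⁻¹ ω
  have hηeq : η = g + ω * g⁻¹ * ω := by
    ext a b
    have h1 : ⟪N a, u b⟫ = 0 := by
      rw [real_inner_comm]; exact hNperp a _ (huT b)
    have h2 : ⟪N a, N b⟫ = ⟪N a, J (F b)⟫ := by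
      rw [hN b]; rw [inner_sub_right, h1, sub_zero]
    have h3 : ⟪u a, J (F b)⟫ = -(ω * g⁻¹ * ω) a b := by
      rw [hu a, sum_inner]
      have : ∀ p, ⟪(ω * g⁻¹) a p • F p, J (F b)⟫ = (ω * g⁻¹) a p * (-ω p b) := by
        intro p
        rw [real_inner_smul_left, real_inner_comm, ← hω, hωa]
      rw [Finset.sum_congr rfl fun p _ => this p]
      rw [Matrix.mul_apply (M := ω * g⁻¹) (N := ω)]
      simp [Finset.sum_neg_distrib]
    have h4 : ⟪J (F a), J (F b)⟫ = g a b := by rw [hJorth, hg]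
    rw [hη, h2, hN a, inner_sub_left, h3, h4, Matrix.add_apply, sub_neg_eq_add]
  -- N is linearly independent, so η is invertible
  have hNli : LinearIndependent ℝ N := by
    rw [Fintype.linearIndependent_iff]
    intro c hc
    have hx : (∑ i, c i • J (F i)) = ∑ i, c i • u i := by
      have : (∑ i, c i • (J (F i) - u i)) = 0 := by
        rw [← hc]; exact Finset.sum_congr rfl fun i _ => by rw [hN i]
      refine sub_eq_zero.mp ?_
      rw [← Finset.sum_sub_distrib]
      simpa [smul_sub] using this
    have hv : (∑ i, c i • F i) ∈ T := Submodule.sum_mem T fun i _ => Submodule.smul_mem T _ (hFT i)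
    have hJv : J (∑ i, c i • F i) = ∑ i, c i • J (F i) := by
      rw [map_sum]; exact Finset.sum_congr rfl fun i _ => by rw [map_smul]
    have hmem : J (∑ i, c i • F i) ∈ T ⊓ T.map J := by
      constructor
      · rw [hJv, hx]
        exact Submodule.sum_mem T fun i _ => Submodule.smul_mem T _ (huT i)
      · exact ⟨_, hv, rfl⟩
    rw [htotallyReal] at hmem
    have h0 : (∑ i, c i • F i) = 0 := by
      have := congrArg J hmem
      rw [hJ2, map_zero, neg_eq_zero] at this
      exact this
    exact Fintype.linearIndependent_iff.mp hF c h0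
  have hηU : IsUnit η := gram_isUnit hNli hη
  have hηdet : IsUnit η.det := (Matrix.isUnit_iff_isUnit_det η).mp hηU
  -- symmetry of g, η and their inverses
  have hgsym : g.transpose = g := by ext a b; rw [Matrix.transpose_apply, hg, hg, real_inner_comm]
  have hηsym : η.transpose = η := by ext a b; rw [Matrix.transpose_apply, hη, hη, real_inner_comm]
  have hginv_sym : ∀ a b, g⁻¹ a b = g⁻¹ b a := by
    intro a b
    have ht : (g⁻¹).transpose = g⁻¹ := by rw [Matrix.transpose_nonsing_inv, hgsym]
    have := congrFun (congrFun ht a) b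
    simpa [Matrix.transpose_apply] using this.symm
  have hηinv_sym : ∀ a b, η⁻¹ a b = η⁻¹ b a := by
    intro a b
    have ht : (η⁻¹).transpose = η⁻¹ := by rw [Matrix.transpose_nonsing_inv, hηsym]
    have := congrFun (congrFun ht a) b
    simpa [Matrix.transpose_apply] using this.symm
  -- the key matrix identity
  have hkeyM : g⁻¹ - η⁻¹ = η⁻¹ * (ω * (g⁻¹ * (ω * g⁻¹))) := by
    have h1 : ω * (g⁻¹ * (ω * g⁻¹)) = (η - g) * g⁻¹ := by
      rw [hηeq, add_sub_cancel_left, Matrix.mul_assoc, Matrix.mul_assoc]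
    rw [h1, sub_mul, mul_sub, Matrix.mul_nonsing_inv g hgdet, mul_one,
      ← mul_assoc, Matrix.nonsing_inv_mul η hηdet, one_mul]
  -- entrywise identity
  have hkey : ∀ j k, g⁻¹ k j - η⁻¹ k j
      = ∑ s, ∑ p, ∑ q, ∑ r, η⁻¹ j s * ω s p * g⁻¹ p q * ω q r * g⁻¹ r k := by
    intro j k
    have e1 : g⁻¹ k j - η⁻¹ k j = (g⁻¹ - η⁻¹) j k := by
      rw [Matrix.sub_apply, hginv_sym, hηinv_sym]
    rw [e1, hkeyM]
    simp only [Matrix.mul_apply, Finset.mul_sum]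
    refine Finset.sum_congr rfl fun s _ => Finset.sum_congr rfl fun p _ =>
      Finset.sum_congr rfl fun q _ => Finset.sum_congr rfl fun r _ => by ring
  intro i
  -- reorganize the left-hand side
  have e1 : (∑ k, ∑ j, g⁻¹ k j * h j i k) = ∑ j, ∑ k, g⁻¹ k j * h j i k :=
    Finset.sum_comm
  have e2 : (∑ j, ∑ k, η⁻¹ j k * h k i j) = ∑ j, ∑ k, η⁻¹ k j * h j i k :=
    Finset.sum_comm
  rw [e1, e2, ← Finset.sum_sub_distrib]
  have e3 : ∀ j, (∑ k, g⁻¹ k j * h j i k) - (∑ k, η⁻¹ k j * h j i k)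
      = ∑ k, (g⁻¹ k j - η⁻¹ k j) * h j i k := by
    intro j; rw [← Finset.sum_sub_distrib]
    exact Finset.sum_congr rfl fun k _ => (sub_mul _ _ _).symm
  refine Finset.sum_congr rfl fun j _ => ?_
  rw [e3 j]
  -- rewrite using the key identity and push the sum over k inside
  have e4 : (∑ k, (g⁻¹ k j - η⁻¹ k j) * h j i k)
      = ∑ k, ∑ s, ∑ p, ∑ q, ∑ r,
          η⁻¹ j s * ω s p * g⁻¹ p q * ω q r * g⁻¹ r k * h j i k := by
    refine Finset.sum_congr rfl fun k _ => ?_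
    rw [hkey j k, Finset.sum_mul]
    refine Finset.sum_congr rfl fun s _ => ?_
    rw [Finset.sum_mul]
    refine Finset.sum_congr rfl fun p _ => ?_
    rw [Finset.sum_mul]
    refine Finset.sum_congr rfl fun q _ => ?_
    rw [Finset.sum_mul]
  rw [e4]
  -- commute the sum over k to the inside
  rw [Finset.sum_comm]
  refine Finset.sum_congr rfl fun s _ => ?_
  rw [Finset.sum_comm]
  refine Finset.sum_congr rfl fun p _ => ?_
  rw [Finset.sum_comm]
  refine Finset.sum_congr rfl fun q _ => ?_
  rw [Finset.sum_comm]
end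

section
/- Let F: L → X be a totally real immersion into a Kähler manifold. Contracting the curvature term ⟨R̄(N_p, F_j)F_k, N_i⟩ with g^{ik} produces the ambient Ricci curvature: Ric̄(F_p, F_j) = g^{ik}⟨R̄(N_p, F_j)F_k, N_i⟩ + (1/2) ω^{ki}⟨R̄(JF_p, F_j)F_k, F_i⟩ + (1/2) η^{ik} ω_k{}^r ⟨R̄(JF_p, F_j)N_r, N_i⟩ + g^{ik} ω_p{}^r ⟨R̄(F_r, F_j)F_k, N_i⟩. -/
open scoped RealInnerProductSpace

private lemma inner_J_move {W : Type*} [NormedAddCommGroup W] [InnerProductSpace ℝ W]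
    (J : W →ₗ[ℝ] W) (hJ2 : ∀ v, J (J v) = -v) (hJorth : ∀ v w, ⟪J v, J w⟫ = ⟪v, w⟫)
    (x y : W) : ⟪J x, y⟫ = -⟪x, J y⟫ := by
  have h := hJorth x (J y)
  rw [hJ2 y, inner_neg_right] at h
  linarith

private lemma trace_frame {W : Type*} [NormedAddCommGroup W] [InnerProductSpace ℝ W]
    [FiniteDimensional ℝ W] (M : W →ₗ[ℝ] W) {ι : Type*} [Fintype ι] (b d : ι → W)
    (hexp : ∀ v : W, v = ∑ a, ⟪v, d a⟫ • b a) :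
    ∑ α, ⟪M (stdOrthonormalBasis ℝ W α), stdOrthonormalBasis ℝ W α⟫
      = ∑ a, ⟪M (b a), d a⟫ := by
  have h1 : ∀ α, ⟪M (stdOrthonormalBasis ℝ W α), stdOrthonormalBasis ℝ W α⟫
      = ∑ a, ⟪stdOrthonormalBasis ℝ W α, d a⟫ * ⟪M (b a), stdOrthonormalBasis ℝ W α⟫ := by
    intro α
    have h2 : M (stdOrthonormalBasis ℝ W α)
        = ∑ a, ⟪stdOrthonormalBasis ℝ W α, d a⟫ • M (b a) := by
      conv_lhs => rw [hexp (stdOrthonormalBasis ℝ W α)]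
      rw [map_sum]
      simp
    rw [h2, sum_inner]
    refine Finset.sum_congr rfl fun a _ => ?_
    rw [real_inner_smul_left]
  simp_rw [h1]
  rw [Finset.sum_comm]
  refine Finset.sum_congr rfl fun a _ => ?_
  have h3 := OrthonormalBasis.sum_inner_mul_inner (stdOrthonormalBasis ℝ W) (d a) (M (b a))
  calc ∑ α, ⟪stdOrthonormalBasis ℝ W α, d a⟫ * ⟪M (b a), stdOrthonormalBasis ℝ W α⟫
      = ∑ α, ⟪d a, stdOrthonormalBasis ℝ W α⟫ * ⟪stdOrthonormalBasis ℝ W α, M (b a)⟫ := by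
        refine Finset.sum_congr rfl fun α _ => ?_
        rw [real_inner_comm (stdOrthonormalBasis ℝ W α) (d a),
            real_inner_comm (M (b a)) (stdOrthonormalBasis ℝ W α)]
    _ = ⟪d a, M (b a)⟫ := h3
    _ = ⟪M (b a), d a⟫ := real_inner_comm _ _

private lemma gram_det_unit {W : Type*} [NormedAddCommGroup W] [InnerProductSpace ℝ W]
    {n : ℕ} (F : Fin n → W) (hF : LinearIndependent ℝ F)
    (g : Matrix (Fin n) (Fin n) ℝ) (hg : ∀ i j, g i j = ⟪F i, F j⟫) :
    IsUnit g.det := by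
  classical
  rw [isUnit_iff_ne_zero]
  intro h0
  obtain ⟨v, hv, hgv⟩ := Matrix.exists_mulVec_eq_zero_iff.mpr h0
  have hz : (∑ i, v i • F i) = 0 := by
    have hnorm : ⟪∑ i, v i • F i, ∑ i, v i • F i⟫ = 0 := by
      have h1 : ⟪∑ i, v i • F i, ∑ i, v i • F i⟫ = ∑ i, v i * (g.mulVec v) i := by
        rw [sum_inner]
        refine Finset.sum_congr rfl fun i _ => ?_
        rw [real_inner_smul_left, inner_sum]
        congr 1
        rw [Matrix.mulVec, dotProduct]
        refine Finset.sum_congr rfl fun k _ => ?_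
        rw [real_inner_smul_right, hg, mul_comm]
      rw [h1, hgv]
      simp
    exact inner_self_eq_zero.mp hnorm
  exact hv (funext (Fintype.linearIndependent_iff.mp hF v hz))

set_option maxHeartbeats 2000000 in
/-- **Extracting the ambient Ricci curvature (equation (4.3) / `Thing101`).**
Let `F : L → X` be a totally real immersion into a Kähler manifold.  At a point we model
`T_pX` by a real inner product space `W` of dimension `2n` with orthogonal complex
structure `J`; `F i` is the coordinate tangent frame spanning `T`,
`N i = π_⊥(J (F i))` the normal frame, and `g, ω, η` the associated matrices (indices
raised with `g⁻¹` except for `η⁻¹`).  Let `R` be the ambient Riemann curvature tensor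
(a trilinear map, with convention `R̄_{νργβ} = ⟪R̄(e_ν, e_ρ)e_γ, e_β⟫`), satisfying the
usual symmetries, the first Bianchi identity, and the Kähler symmetry
`R̄(Jx, Jy) = R̄(x, y)`, and let `Ric` be the ambient Ricci curvature.  Then contracting
`⟪R̄(N_p, F_j)F_k, N_i⟫` with `g^{ik}` produces the Ricci curvature:
`Ric(F_p, F_j) = g^{ik}⟪R̄(N_p,F_j)F_k, N_i⟫ + ½ ω^{ki}⟪R̄(JF_p,F_j)F_k, F_i⟫
  + ½ η^{ik} ω_k{}^r ⟪R̄(JF_p,F_j)N_r, N_i⟫ + g^{ik} ω_p{}^r ⟪R̄(F_r,F_j)F_k, N_i⟫`. -/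
theorem ricci_contraction_identity
    {W : Type*} [NormedAddCommGroup W] [InnerProductSpace ℝ W] [FiniteDimensional ℝ W]
    {n : ℕ} (hrank : Module.finrank ℝ W = 2 * n)
    (J : W →ₗ[ℝ] W)
    (hJ2 : ∀ v, J (J v) = -v)
    (hJorth : ∀ v w, ⟪J v, J w⟫ = ⟪v, w⟫)
    (F : Fin n → W) (hF : LinearIndependent ℝ F)
    (T : Submodule ℝ W) (hT : T = Submodule.span ℝ (Set.range F))
    (htotallyReal : T ⊓ T.map J = ⊥)
    (N : Fin n → W)
    (hN : ∀ i, N i = J (F i) - (T.orthogonalProjection (J (F i)) : W))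
    (g ω η : Matrix (Fin n) (Fin n) ℝ)
    (hg : ∀ i j, g i j = ⟪F i, F j⟫)
    (hω : ∀ i j, ω i j = ⟪J (F i), F j⟫)
    (hη : ∀ i j, η i j = ⟪N i, N j⟫)
    (R : W →ₗ[ℝ] W →ₗ[ℝ] W →ₗ[ℝ] W)
    (hRskew1 : ∀ x y z w : W, ⟪R x y z, w⟫ = -⟪R y x z, w⟫)
    (hRskew2 : ∀ x y z w : W, ⟪R x y z, w⟫ = -⟪R x y w, z⟫)
    (hRpair : ∀ x y z w : W, ⟪R x y z, w⟫ = ⟪R z w x, y⟫)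
    (hBianchi : ∀ x y z : W, R x y z + R y z x + R z x y = 0)
    (hKahler : ∀ x y z : W, R (J x) (J y) z = R x y z)
    (Ric : W → W → ℝ)
    (hRic : ∀ x y, Ric x y =
      ∑ α, ⟪R (stdOrthonormalBasis ℝ W α) x y, stdOrthonormalBasis ℝ W α⟫) :
    ∀ p j, Ric (F p) (F j)
      = (∑ i, ∑ k, g⁻¹ i k * ⟪R (N p) (F j) (F k), N i⟫)
        + (1 / 2) * (∑ k, ∑ i, (∑ a, ∑ b, g⁻¹ k a * ω a b * g⁻¹ b i)
            * ⟪R (J (F p)) (F j) (F k), F i⟫)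
        + (1 / 2) * (∑ i, ∑ k, η⁻¹ i k
            * (∑ r, (∑ q, ω k q * g⁻¹ q r) * ⟪R (J (F p)) (F j) (N r), N i⟫))
        + (∑ i, ∑ k, g⁻¹ i k
            * (∑ r, (∑ q, ω p q * g⁻¹ q r) * ⟪R (F r) (F j) (F k), N i⟫)) := by
  intro p j
  classical
  have hJmove : ∀ x y : W, ⟪J x, y⟫ = -⟪x, J y⟫ := inner_J_move J hJ2 hJorth
  -- membership facts
  have hFmemT : ∀ i, F i ∈ T := by
    intro i; rw [hT]; exact Submodule.subset_span (Set.mem_range_self i)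
  have hNmem : ∀ i, N i ∈ Tᗮ := by
    intro i; rw [hN i]; exact T.sub_starProjection_mem_orthogonal _
  have hFN0 : ∀ i k, ⟪F i, N k⟫ = 0 := by
    intro i k
    exact (Submodule.mem_orthogonal T (N k)).mp (hNmem k) (F i) (hFmemT i)
  have hNF0 : ∀ i k, ⟪N i, F k⟫ = 0 := by
    intro i k; rw [real_inner_comm]; exact hFN0 k i
  -- linear independence of N
  have hNli : LinearIndependent ℝ N := by
    rw [Fintype.linearIndependent_iff]
    intro c hc
    have hsum : (∑ i, c i • N i)
        = J (∑ i, c i • F i) - (T.orthogonalProjection (J (∑ i, c i • F i)) : W) := by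
      rw [map_sum, map_sum]
      rw [Submodule.coe_sum]
      rw [← Finset.sum_sub_distrib]
      refine Finset.sum_congr rfl fun i _ => ?_
      rw [hN i, smul_sub]
      congr 1
      · rw [map_smul]
      · rw [map_smul, map_smul, Submodule.coe_smul]
    set u := ∑ i, c i • F i with hu
    have humem : u ∈ T := by
      rw [hT]
      exact Submodule.sum_mem _ fun i _ => Submodule.smul_mem _ _
        (Submodule.subset_span (Set.mem_range_self i))
    have hJu : J u ∈ T := by
      have h2 : J u = (T.orthogonalProjection (J u) : W) := by
        have h3 := hsum
        rw [hc] at h3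
        have h4 := h3.symm
        rw [sub_eq_zero] at h4
        exact h4
      rw [h2]
      exact (T.orthogonalProjection (J u)).2
    have hJu2 : J u ∈ T.map J := ⟨u, humem, rfl⟩
    have hbot : J u ∈ (⊥ : Submodule ℝ W) := htotallyReal ▸ Submodule.mem_inf.mpr ⟨hJu, hJu2⟩
    have hJu0 : J u = 0 := hbot
    have hu0 : u = 0 := by
      have h5 := congrArg J hJu0
      rw [hJ2] at h5
      simpa using h5.symm
    intro i
    exact Fintype.linearIndependent_iff.mp hF c hu0 i
  -- matrix invertibility
  have hgdet : IsUnit g.det := gram_det_unit F hF g hg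
  have hηdet : IsUnit η.det := gram_det_unit N hNli η hη
  have hginv1 : g⁻¹ * g = 1 := Matrix.nonsing_inv_mul g hgdet
  have hginv2 : g * g⁻¹ = 1 := Matrix.mul_nonsing_inv g hgdet
  have hηinv1 : η⁻¹ * η = 1 := Matrix.nonsing_inv_mul η hηdet
  have hgsymm : g.transpose = g := Matrix.ext fun i k => by
    rw [Matrix.transpose_apply, hg, hg, real_inner_comm]
  have hginvsym : ∀ i k, g⁻¹ i k = g⁻¹ k i := by
    intro i k
    have h1 : g⁻¹.transpose = g⁻¹ := by rw [Matrix.transpose_nonsing_inv, hgsymm]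
    conv_lhs => rw [← h1]
    rw [Matrix.transpose_apply]
  set w : Matrix (Fin n) (Fin n) ℝ := ω * g⁻¹ with hwdef
  have hw : ∀ k r, w k r = ∑ q, ω k q * g⁻¹ q r := fun k r => Matrix.mul_apply
  -- orthogonality from generators
  have hTperp : ∀ v : W, (∀ i, ⟪F i, v⟫ = 0) → v ∈ Tᗮ := by
    intro v hv
    rw [hT, Submodule.mem_orthogonal]
    intro u hu
    induction hu using Submodule.span_induction with
    | mem x hx => obtain ⟨i, rfl⟩ := hx; exact hv i
    | zero => simp
    | add x y _ _ hx hy => rw [inner_add_left, hx, hy]; ring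
    | smul c x _ hx => rw [real_inner_smul_left, hx]; ring
  -- the key frame identity J (F k) = N k + ∑ r, w k r • F r
  have hwg : w * g = ω := by
    rw [hwdef, Matrix.mul_assoc, hginv1, Matrix.mul_one]
  have hJFk : ∀ k, J (F k) = N k + ∑ r, w k r • F r := by
    intro k
    set q : W := ∑ r, w k r • F r with hq
    have hqT : q ∈ T := by
      rw [hT]
      exact Submodule.sum_mem _ fun r _ => Submodule.smul_mem _ _
        (Submodule.subset_span (Set.mem_range_self r))
    have hFq : ∀ s, ⟪F s, q⟫ = ω k s := by
      intro s
      have h1 : ⟪F s, q⟫ = ∑ r, w k r * g r s := by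
        rw [hq, inner_sum]
        refine Finset.sum_congr rfl fun r _ => ?_
        rw [real_inner_smul_right, hg r s, real_inner_comm (F r) (F s)]
      have h2 := congrFun (congrFun hwg k) s
      rw [Matrix.mul_apply] at h2
      rw [h1, h2]
    have horth : (J (F k) - q) ∈ Tᗮ := by
      refine hTperp _ fun s => ?_
      rw [inner_sub_right, hFq s, real_inner_comm, ← hω, sub_self]
    have hmemperp : N k - (J (F k) - q) ∈ Tᗮ := Submodule.sub_mem _ (hNmem k) horth
    have heqT : N k - (J (F k) - q) = q - (T.orthogonalProjection (J (F k)) : W) := by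
      rw [hN k]; abel
    have hmemT : N k - (J (F k) - q) ∈ T := by
      rw [heqT]
      exact Submodule.sub_mem _ hqT (T.orthogonalProjection (J (F k))).2
    have h0 : N k - (J (F k) - q) = 0 :=
      (Submodule.disjoint_def.mp (Submodule.orthogonal_disjoint T)) _ hmemT hmemperp
    have h5 := sub_eq_zero.mp h0
    rw [h5]
    abel
  have hJNk : ∀ k, J (N k) = -F k - ∑ r, w k r • J (F r) := by
    intro k
    have h1 := congrArg J (hJFk k)
    rw [hJ2, map_add, map_sum] at h1
    simp only [map_smul] at h1
    have h2 : J (N k) = -F k - ∑ r, w k r • J (F r) := by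
      rw [eq_sub_iff_add_eq]
      exact h1.symm
    exact h2
  -- skew symmetry of ω
  have hωskew : ∀ a b, ω a b = -ω b a := by
    intro a b
    rw [hω, hω, hJmove, real_inner_comm]
  -- matrix identity η = g + w * ω
  have hNsub : ∀ k, N k = J (F k) - ∑ r, w k r • F r := by
    intro k
    rw [hJFk k]
    abel
  have hη_eq : η = g + w * ω := by
    ext i jj
    rw [Matrix.add_apply, Matrix.mul_apply, hη]
    calc ⟪N i, N jj⟫ = ⟪N i, J (F jj)⟫ - ∑ r, w jj r * ⟪N i, F r⟫ := by
          conv_lhs => rw [hNsub jj]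
          rw [inner_sub_right, inner_sum]
          congr 1
          exact Finset.sum_congr rfl fun r _ => real_inner_smul_right _ _ _
      _ = ⟪N i, J (F jj)⟫ := by simp [hNF0]
      _ = ⟪J (F i), J (F jj)⟫ - ∑ r, w i r * ⟪F r, J (F jj)⟫ := by
          conv_lhs => rw [hNsub i]
          rw [inner_sub_left, sum_inner]
          congr 1
          exact Finset.sum_congr rfl fun r _ => real_inner_smul_left _ _ _
      _ = g i jj + ∑ r, w i r * ω r jj := by
          rw [hJorth, ← hg, sub_eq_add_neg]
          congr 1
          rw [← Finset.sum_neg_distrib]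
          refine Finset.sum_congr rfl fun r _ => ?_
          rw [real_inner_comm, ← hω, hωskew jj r]
          ring
  -- key identity η⁻¹ (1 + w w) = g⁻¹
  have hkey : η⁻¹ * (1 + w * w) = g⁻¹ := by
    have h1 : (1 : Matrix (Fin n) (Fin n) ℝ) + w * w = η * g⁻¹ := by
      rw [hη_eq, Matrix.add_mul, hginv2, Matrix.mul_assoc w ω g⁻¹, ← hwdef]
    rw [h1, ← Matrix.mul_assoc, hηinv1, Matrix.one_mul]
  have hkeyE : ∀ i s, (∑ k, η⁻¹ i k * ((1 : Matrix (Fin n) (Fin n) ℝ) k s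
      + ∑ r, w k r * w r s)) = g⁻¹ i s := by
    intro i s
    have h1 := congrFun (congrFun hkey i) s
    rw [Matrix.mul_apply] at h1
    rw [← h1]
    refine Finset.sum_congr rfl fun k _ => ?_
    rw [Matrix.add_apply, Matrix.mul_apply]
  -- the frame and its dual
  set Bv : Fin n ⊕ Fin n → W := Sum.elim F N with hBv
  set Dv : Fin n ⊕ Fin n → W := Sum.elim (fun i => ∑ k, g⁻¹ i k • F k)
      (fun i => ∑ k, η⁻¹ i k • N k) with hDv
  have hFNli : LinearIndependent ℝ Bv := by
    refine hF.sum_type hNli ?_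
    rw [← hT]
    refine Disjoint.mono_right ?_ (Submodule.orthogonal_disjoint T)
    rw [Submodule.span_le]
    rintro x ⟨i, rfl⟩
    exact hNmem i
  haveI : Nonempty (Fin n ⊕ Fin n) := ⟨Sum.inl p⟩
  have hcard : Fintype.card (Fin n ⊕ Fin n) = Module.finrank ℝ W := by
    simp [hrank, two_mul]
  have hdual1 : ∀ (c i : Fin n), ⟪F c, ∑ k, g⁻¹ i k • F k⟫ = if i = c then (1:ℝ) else 0 := by
    intro c i
    have h1 : ⟪F c, ∑ k, g⁻¹ i k • F k⟫ = ∑ k, g⁻¹ i k * g k c := by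
      rw [inner_sum]
      refine Finset.sum_congr rfl fun k _ => ?_
      rw [real_inner_smul_right, hg k c, real_inner_comm (F k) (F c)]
    have h2 := congrFun (congrFun hginv1 i) c
    rw [Matrix.mul_apply] at h2
    rw [h1, h2, Matrix.one_apply]
  have hdual2 : ∀ (c i : Fin n), ⟪N c, ∑ k, η⁻¹ i k • N k⟫ = if i = c then (1:ℝ) else 0 := by
    intro c i
    have h1 : ⟪N c, ∑ k, η⁻¹ i k • N k⟫ = ∑ k, η⁻¹ i k * η k c := by
      rw [inner_sum]
      refine Finset.sum_congr rfl fun k _ => ?_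
      rw [real_inner_smul_right, hη k c, real_inner_comm (N k) (N c)]
    have h2 := congrFun (congrFun hηinv1 i) c
    rw [Matrix.mul_apply] at h2
    rw [h1, h2, Matrix.one_apply]
  have hcross1 : ∀ (c i : Fin n), ⟪F c, ∑ k, η⁻¹ i k • N k⟫ = 0 := by
    intro c i
    rw [inner_sum]
    refine Finset.sum_eq_zero fun k _ => ?_
    rw [real_inner_smul_right, hFN0, mul_zero]
  have hcross2 : ∀ (c i : Fin n), ⟪N c, ∑ k, g⁻¹ i k • F k⟫ = 0 := by
    intro c i
    rw [inner_sum]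
    refine Finset.sum_eq_zero fun k _ => ?_
    rw [real_inner_smul_right, hNF0, mul_zero]
  have hPid : ∀ cc : Fin n ⊕ Fin n, (∑ a, ⟪Bv cc, Dv a⟫ • Bv a) = Bv cc := by
    intro cc
    rw [Fintype.sum_sum_type]
    cases cc with
    | inl c =>
      simp only [hBv, hDv, Sum.elim_inl, Sum.elim_inr, hdual1, hcross1,
        ite_smul, one_smul, zero_smul]
      simp
    | inr c =>
      simp only [hBv, hDv, Sum.elim_inl, Sum.elim_inr, hdual2, hcross2,
        ite_smul, one_smul, zero_smul]
      simp
  have hexp : ∀ v : W, v = ∑ a, ⟪v, Dv a⟫ • Bv a := by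
    let P : W →ₗ[ℝ] W :=
      { toFun := fun v => ∑ a, ⟪v, Dv a⟫ • Bv a
        map_add' := by
          intro x y
          simp only [inner_add_left, add_smul, Finset.sum_add_distrib]
        map_smul' := by
          intro c x
          simp only [real_inner_smul_left, RingHom.id_apply, mul_smul, ← Finset.smul_sum] }
    have hPeq : P = LinearMap.id := by
      let bas : Module.Basis (Fin n ⊕ Fin n) ℝ W := basisOfLinearIndependentOfCardEqFinrank hFNli hcard
      apply Module.Basis.ext bas
      intro cc
      have hb : bas cc = Bv cc := by
        simp only [bas, coe_basisOfLinearIndependentOfCardEqFinrank]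
      rw [hb, LinearMap.id_apply]
      exact hPid cc
    intro v
    exact (LinearMap.ext_iff.mp hPeq v).symm
  have hexpJ : ∀ v : W, v = ∑ α, ⟪v, J (stdOrthonormalBasis ℝ W α)⟫
      • J (stdOrthonormalBasis ℝ W α) := by
    intro v
    have h1 : ∑ α, ⟪J v, stdOrthonormalBasis ℝ W α⟫ • stdOrthonormalBasis ℝ W α = J v := by
      have := OrthonormalBasis.sum_repr' (stdOrthonormalBasis ℝ W) (J v)
      simpa [real_inner_comm] using this
    have h2 := congrArg J h1
    rw [map_sum] at h2
    simp only [map_smul, hJ2] at h2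
    have h3 : ∀ α, ⟪J v, stdOrthonormalBasis ℝ W α⟫
        = -⟪v, J (stdOrthonormalBasis ℝ W α)⟫ := fun α => hJmove v _
    calc v = -(-v) := by rw [neg_neg]
      _ = ∑ α, ⟪v, J (stdOrthonormalBasis ℝ W α)⟫ • J (stdOrthonormalBasis ℝ W α) := by
        rw [← h2]
        rw [← Finset.sum_neg_distrib]
        refine Finset.sum_congr rfl fun α _ => ?_
        rw [h3 α]
        simp
  -- ===== Step 1 : 2 Ric = ∑ α ⟪R X Y e_α, J e_α⟫ =====
  have hM1exp : ∀ u : W, ⟪R (J (F p)) u (J u), F j⟫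
      = ⟪(J ∘ₗ (LinearMap.flip (R (J (F p))) (F j))) u, u⟫ := by
    intro u
    rw [hRskew2 (J (F p)) u (J u) (F j)]
    rw [LinearMap.comp_apply, LinearMap.flip_apply, hJmove]
  have hswap : ∑ α, ⟪R (J (F p)) (stdOrthonormalBasis ℝ W α)
        (J (stdOrthonormalBasis ℝ W α)), F j⟫
      = ∑ α, ⟪R (J (F p)) (J (stdOrthonormalBasis ℝ W α))
        (J (J (stdOrthonormalBasis ℝ W α))), F j⟫ := by
    have t1 := trace_frame (J ∘ₗ (LinearMap.flip (R (J (F p))) (F j)))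
      (fun α => J (stdOrthonormalBasis ℝ W α)) (fun α => J (stdOrthonormalBasis ℝ W α)) hexpJ
    calc ∑ α, ⟪R (J (F p)) (stdOrthonormalBasis ℝ W α)
          (J (stdOrthonormalBasis ℝ W α)), F j⟫
        = ∑ α, ⟪(J ∘ₗ (LinearMap.flip (R (J (F p))) (F j))) (stdOrthonormalBasis ℝ W α),
            stdOrthonormalBasis ℝ W α⟫ :=
          Finset.sum_congr rfl fun α _ => hM1exp _
      _ = ∑ α, ⟪(J ∘ₗ (LinearMap.flip (R (J (F p))) (F j))) (J (stdOrthonormalBasis ℝ W α)),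
            J (stdOrthonormalBasis ℝ W α)⟫ := t1
      _ = ∑ α, ⟪R (J (F p)) (J (stdOrthonormalBasis ℝ W α))
            (J (J (stdOrthonormalBasis ℝ W α))), F j⟫ :=
          Finset.sum_congr rfl fun α _ => (hM1exp _).symm
  have hsecond : ∑ α, ⟪R (J (F p)) (stdOrthonormalBasis ℝ W α)
        (J (stdOrthonormalBasis ℝ W α)), F j⟫ = -Ric (F p) (F j) := by
    rw [hswap]
    have h1 : ∀ α, ⟪R (J (F p)) (J (stdOrthonormalBasis ℝ W α))
        (J (J (stdOrthonormalBasis ℝ W α))), F j⟫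
        = -⟪R (stdOrthonormalBasis ℝ W α) (F p) (F j), stdOrthonormalBasis ℝ W α⟫ := by
      intro α
      rw [hKahler (F p) (stdOrthonormalBasis ℝ W α), hJ2, map_neg, inner_neg_left]
      rw [hRskew1 (F p) (stdOrthonormalBasis ℝ W α) (stdOrthonormalBasis ℝ W α) (F j)]
      rw [hRskew2 (stdOrthonormalBasis ℝ W α) (F p) (stdOrthonormalBasis ℝ W α) (F j)]
      ring_nf
    simp_rw [h1]
    rw [hRic (F p) (F j)]
    rw [← Finset.sum_neg_distrib]
  have hstep1 : ∑ α, ⟪R (J (F p)) (F j) (stdOrthonormalBasis ℝ W α),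
      J (stdOrthonormalBasis ℝ W α)⟫ = 2 * Ric (F p) (F j) := by
    have hA : ∀ α, ⟪R (J (F p)) (F j) (stdOrthonormalBasis ℝ W α),
        J (stdOrthonormalBasis ℝ W α)⟫
        = ⟪R (stdOrthonormalBasis ℝ W α) (F p) (F j), stdOrthonormalBasis ℝ W α⟫
          - ⟪R (J (F p)) (stdOrthonormalBasis ℝ W α)
            (J (stdOrthonormalBasis ℝ W α)), F j⟫ := by
      intro α
      have h2 : R (stdOrthonormalBasis ℝ W α) (J (stdOrthonormalBasis ℝ W α)) (J (F p))
          = -(R (J (stdOrthonormalBasis ℝ W α)) (J (F p)) (stdOrthonormalBasis ℝ W α)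
            + R (J (F p)) (stdOrthonormalBasis ℝ W α) (J (stdOrthonormalBasis ℝ W α))) := by
        have h3 := hBianchi (stdOrthonormalBasis ℝ W α) (J (stdOrthonormalBasis ℝ W α)) (J (F p))
        rw [add_assoc] at h3
        exact eq_neg_of_add_eq_zero_left h3
      calc ⟪R (J (F p)) (F j) (stdOrthonormalBasis ℝ W α), J (stdOrthonormalBasis ℝ W α)⟫
          = ⟪R (stdOrthonormalBasis ℝ W α) (J (stdOrthonormalBasis ℝ W α)) (J (F p)), F j⟫ :=
            hRpair _ _ _ _
        _ = -⟪R (stdOrthonormalBasis ℝ W α) (F p) (stdOrthonormalBasis ℝ W α), F j⟫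
            - ⟪R (J (F p)) (stdOrthonormalBasis ℝ W α)
              (J (stdOrthonormalBasis ℝ W α)), F j⟫ := by
            rw [h2, hKahler (stdOrthonormalBasis ℝ W α) (F p), inner_neg_left, inner_add_left]
            ring
        _ = ⟪R (stdOrthonormalBasis ℝ W α) (F p) (F j), stdOrthonormalBasis ℝ W α⟫
            - ⟪R (J (F p)) (stdOrthonormalBasis ℝ W α)
              (J (stdOrthonormalBasis ℝ W α)), F j⟫ := by
            rw [hRskew2 (stdOrthonormalBasis ℝ W α) (F p) (stdOrthonormalBasis ℝ W α) (F j)]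
            ring
    simp_rw [hA]
    rw [Finset.sum_sub_distrib, hsecond, ← hRic (F p) (F j)]
    ring
  -- ===== Step 2 : compute the trace in the F/N frame =====
  have hM2exp : ∀ u v' : W, ⟪(J ∘ₗ (R (J (F p)) (F j))) u, v'⟫
      = -⟪R (J (F p)) (F j) u, J v'⟫ := by
    intro u v'
    rw [LinearMap.comp_apply, hJmove]
  have hstep2 : ∑ α, ⟪R (J (F p)) (F j) (stdOrthonormalBasis ℝ W α),
        J (stdOrthonormalBasis ℝ W α)⟫
      = (∑ i, ∑ k, g⁻¹ i k * ⟪R (J (F p)) (F j) (F i), J (F k)⟫)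
        + (∑ i, ∑ k, η⁻¹ i k * ⟪R (J (F p)) (F j) (N i), J (N k)⟫) := by
    have t1 := trace_frame (J ∘ₗ (R (J (F p)) (F j))) Bv Dv hexp
    have h0 : ∑ α, ⟪R (J (F p)) (F j) (stdOrthonormalBasis ℝ W α),
          J (stdOrthonormalBasis ℝ W α)⟫
        = -∑ α, ⟪(J ∘ₗ (R (J (F p)) (F j))) (stdOrthonormalBasis ℝ W α),
            stdOrthonormalBasis ℝ W α⟫ := by
      rw [← Finset.sum_neg_distrib]
      refine Finset.sum_congr rfl fun α _ => ?_
      rw [hM2exp]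
      ring
    rw [h0, t1, Fintype.sum_sum_type, neg_add]
    congr 1
    · rw [← Finset.sum_neg_distrib]
      refine Finset.sum_congr rfl fun i _ => ?_
      rw [hM2exp, neg_neg]
      simp only [hBv, hDv, Sum.elim_inl]
      rw [map_sum, inner_sum]
      refine Finset.sum_congr rfl fun k _ => ?_
      rw [map_smul, real_inner_smul_right]
    · rw [← Finset.sum_neg_distrib]
      refine Finset.sum_congr rfl fun i _ => ?_
      rw [hM2exp, neg_neg]
      simp only [hBv, hDv, Sum.elim_inr]
      rw [map_sum, inner_sum]
      refine Finset.sum_congr rfl fun k _ => ?_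
      rw [map_smul, real_inner_smul_right]
  -- ===== expansions of J (F k) and J (N k) in inner products =====
  have hFpart : ∀ i k : Fin n, ⟪R (J (F p)) (F j) (F i), J (F k)⟫
      = ⟪R (J (F p)) (F j) (F i), N k⟫
        + ∑ r, w k r * ⟪R (J (F p)) (F j) (F i), F r⟫ := by
    intro i k
    rw [hJFk k, inner_add_right, inner_sum]
    congr 1
    exact Finset.sum_congr rfl fun r _ => real_inner_smul_right _ _ _
  have hNpartJF : ∀ i r' : Fin n, ⟪R (J (F p)) (F j) (N i), J (F r')⟫
      = ⟪R (J (F p)) (F j) (N i), N r'⟫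
        + ∑ s, w r' s * ⟪R (J (F p)) (F j) (N i), F s⟫ := by
    intro i r'
    rw [hJFk r', inner_add_right, inner_sum]
    congr 1
    exact Finset.sum_congr rfl fun s _ => real_inner_smul_right _ _ _
  have hNpart : ∀ i k : Fin n, ⟪R (J (F p)) (F j) (N i), J (N k)⟫
      = -⟪R (J (F p)) (F j) (N i), F k⟫
        - ∑ r, w k r * (⟪R (J (F p)) (F j) (N i), N r⟫
            + ∑ s, w r s * ⟪R (J (F p)) (F j) (N i), F s⟫) := by
    intro i k
    rw [hJNk k, inner_sub_right, inner_neg_right, inner_sum]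
    congr 1
    refine Finset.sum_congr rfl fun r _ => ?_
    rw [real_inner_smul_right, hNpartJF i r]
  -- ===== splitting R (J F p) in the first slot =====
  have hRX : ∀ z u : W, ⟪R (J (F p)) (F j) z, u⟫
      = ⟪R (N p) (F j) z, u⟫ + ∑ r, w p r * ⟪R (F r) (F j) z, u⟫ := by
    intro z u
    have h1 : R (J (F p)) (F j) z = R (N p) (F j) z + ∑ r, w p r • R (F r) (F j) z := by
      conv_lhs => rw [hJFk p]
      rw [map_add, map_sum]
      simp only [LinearMap.add_apply, LinearMap.sum_apply, map_smul, LinearMap.smul_apply]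
    rw [h1, inner_add_left, sum_inner]
    congr 1
    exact Finset.sum_congr rfl fun r _ => real_inner_smul_left _ _ _
  -- ===== the F-frame half =====
  have hFsum : (∑ i, ∑ k, g⁻¹ i k * ⟪R (J (F p)) (F j) (F i), J (F k)⟫)
      = ((∑ i, ∑ k, g⁻¹ i k * ⟪R (N p) (F j) (F k), N i⟫)
          + (∑ i, ∑ k, g⁻¹ i k
            * (∑ r, (∑ q, ω p q * g⁻¹ q r) * ⟪R (F r) (F j) (F k), N i⟫)))
        + (∑ k, ∑ i, (∑ a, ∑ b, g⁻¹ k a * ω a b * g⁻¹ b i)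
            * ⟪R (J (F p)) (F j) (F k), F i⟫) := by
    have hT1 : (∑ i, ∑ k, g⁻¹ i k * ⟪R (J (F p)) (F j) (F i), N k⟫)
        = ∑ i, ∑ k, g⁻¹ i k * ⟪R (J (F p)) (F j) (F k), N i⟫ := by
      rw [Finset.sum_comm]
      refine Finset.sum_congr rfl fun i _ => Finset.sum_congr rfl fun k _ => ?_
      rw [hginvsym k i]
    have hAD : (∑ i, ∑ k, g⁻¹ i k * ⟪R (J (F p)) (F j) (F k), N i⟫)
        = (∑ i, ∑ k, g⁻¹ i k * ⟪R (N p) (F j) (F k), N i⟫)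
          + (∑ i, ∑ k, g⁻¹ i k
            * (∑ r, (∑ q, ω p q * g⁻¹ q r) * ⟪R (F r) (F j) (F k), N i⟫)) := by
      rw [← Finset.sum_add_distrib]
      refine Finset.sum_congr rfl fun i _ => ?_
      rw [← Finset.sum_add_distrib]
      refine Finset.sum_congr rfl fun k _ => ?_
      rw [hRX (F k) (N i), mul_add]
      have e2 : (∑ r, w p r * ⟪R (F r) (F j) (F k), N i⟫)
          = ∑ r, (∑ q, ω p q * g⁻¹ q r) * ⟪R (F r) (F j) (F k), N i⟫ :=
        Finset.sum_congr rfl fun r _ => by rw [← hw p r]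
      rw [e2]
    have hT2 : (∑ i, ∑ k, g⁻¹ i k * (∑ r, w k r * ⟪R (J (F p)) (F j) (F i), F r⟫))
        = ∑ k, ∑ i, (∑ a, ∑ b, g⁻¹ k a * ω a b * g⁻¹ b i)
            * ⟪R (J (F p)) (F j) (F k), F i⟫ := by
      refine Finset.sum_congr rfl fun i _ => ?_
      have e1 : ∀ r, (∑ a, ∑ b, g⁻¹ i a * ω a b * g⁻¹ b r) = ∑ k, g⁻¹ i k * w k r := by
        intro r
        refine Finset.sum_congr rfl fun a _ => ?_
        rw [hw a r, Finset.mul_sum]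
        exact Finset.sum_congr rfl fun b _ => by ring
      calc ∑ k, g⁻¹ i k * (∑ r, w k r * ⟪R (J (F p)) (F j) (F i), F r⟫)
          = ∑ k, ∑ r, g⁻¹ i k * (w k r * ⟪R (J (F p)) (F j) (F i), F r⟫) := by
            refine Finset.sum_congr rfl fun k _ => ?_
            rw [Finset.mul_sum]
        _ = ∑ r, ∑ k, g⁻¹ i k * (w k r * ⟪R (J (F p)) (F j) (F i), F r⟫) := Finset.sum_comm
        _ = ∑ r, (∑ k, g⁻¹ i k * w k r) * ⟪R (J (F p)) (F j) (F i), F r⟫ := by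
            refine Finset.sum_congr rfl fun r _ => ?_
            rw [Finset.sum_mul]
            exact Finset.sum_congr rfl fun k _ => by ring
        _ = ∑ r, (∑ a, ∑ b, g⁻¹ i a * ω a b * g⁻¹ b r)
              * ⟪R (J (F p)) (F j) (F i), F r⟫ := by
            refine Finset.sum_congr rfl fun r _ => ?_
            rw [e1 r]
    calc (∑ i, ∑ k, g⁻¹ i k * ⟪R (J (F p)) (F j) (F i), J (F k)⟫)
        = (∑ i, ∑ k, g⁻¹ i k * ⟪R (J (F p)) (F j) (F i), N k⟫)
          + (∑ i, ∑ k, g⁻¹ i k * (∑ r, w k r * ⟪R (J (F p)) (F j) (F i), F r⟫)) := by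
          rw [← Finset.sum_add_distrib]
          refine Finset.sum_congr rfl fun i _ => ?_
          rw [← Finset.sum_add_distrib]
          refine Finset.sum_congr rfl fun k _ => ?_
          rw [hFpart i k, mul_add]
      _ = ((∑ i, ∑ k, g⁻¹ i k * ⟪R (N p) (F j) (F k), N i⟫)
          + (∑ i, ∑ k, g⁻¹ i k
            * (∑ r, (∑ q, ω p q * g⁻¹ q r) * ⟪R (F r) (F j) (F k), N i⟫)))
        + (∑ k, ∑ i, (∑ a, ∑ b, g⁻¹ k a * ω a b * g⁻¹ b i)
            * ⟪R (J (F p)) (F j) (F k), F i⟫) := by rw [hT1, hAD, hT2]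
  -- ===== standalone A + D identity =====
  have hADder : (∑ i, ∑ k, g⁻¹ i k * ⟪R (J (F p)) (F j) (F k), N i⟫)
      = (∑ i, ∑ k, g⁻¹ i k * ⟪R (N p) (F j) (F k), N i⟫)
        + (∑ i, ∑ k, g⁻¹ i k
          * (∑ r, (∑ q, ω p q * g⁻¹ q r) * ⟪R (F r) (F j) (F k), N i⟫)) := by
    rw [← Finset.sum_add_distrib]
    refine Finset.sum_congr rfl fun i _ => ?_
    rw [← Finset.sum_add_distrib]
    refine Finset.sum_congr rfl fun k _ => ?_
    rw [hRX (F k) (N i), mul_add]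
    have e2 : (∑ r, w p r * ⟪R (F r) (F j) (F k), N i⟫)
        = ∑ r, (∑ q, ω p q * g⁻¹ q r) * ⟪R (F r) (F j) (F k), N i⟫ :=
      Finset.sum_congr rfl fun r _ => by rw [← hw p r]
    rw [e2]
  -- ===== the N-frame half, split into three pieces =====
  have hsplitN : (∑ i, ∑ k, η⁻¹ i k * ⟪R (J (F p)) (F j) (N i), J (N k)⟫)
      = -(∑ i, ∑ k, η⁻¹ i k * ⟪R (J (F p)) (F j) (N i), F k⟫)
        - (∑ i, ∑ k, η⁻¹ i k * (∑ r, w k r * ⟪R (J (F p)) (F j) (N i), N r⟫))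
        - (∑ i, ∑ k, η⁻¹ i k
            * (∑ r, w k r * (∑ s, w r s * ⟪R (J (F p)) (F j) (N i), F s⟫))) := by
    have hper : ∀ i k : Fin n, η⁻¹ i k * ⟪R (J (F p)) (F j) (N i), J (N k)⟫
        = -(η⁻¹ i k * ⟪R (J (F p)) (F j) (N i), F k⟫)
          - η⁻¹ i k * (∑ r, w k r * ⟪R (J (F p)) (F j) (N i), N r⟫)
          - η⁻¹ i k * (∑ r, w k r * (∑ s, w r s * ⟪R (J (F p)) (F j) (N i), F s⟫)) := by
      intro i k
      rw [hNpart i k]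
      have e3 : (∑ r, w k r * (⟪R (J (F p)) (F j) (N i), N r⟫
            + ∑ s, w r s * ⟪R (J (F p)) (F j) (N i), F s⟫))
          = (∑ r, w k r * ⟪R (J (F p)) (F j) (N i), N r⟫)
            + ∑ r, w k r * (∑ s, w r s * ⟪R (J (F p)) (F j) (N i), F s⟫) := by
        rw [← Finset.sum_add_distrib]
        exact Finset.sum_congr rfl fun r _ => by ring
      rw [e3]
      ring
    simp_rw [hper]
    simp only [Finset.sum_sub_distrib, Finset.sum_neg_distrib]
  -- ===== -T4 = C0 =====
  have hC0 : -(∑ i, ∑ k, η⁻¹ i k * (∑ r, w k r * ⟪R (J (F p)) (F j) (N i), N r⟫))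
      = ∑ i, ∑ k, η⁻¹ i k
          * (∑ r, (∑ q, ω k q * g⁻¹ q r) * ⟪R (J (F p)) (F j) (N r), N i⟫) := by
    rw [← Finset.sum_neg_distrib]
    refine Finset.sum_congr rfl fun i _ => ?_
    rw [← Finset.sum_neg_distrib]
    refine Finset.sum_congr rfl fun k _ => ?_
    have e4 : (∑ r, (∑ q, ω k q * g⁻¹ q r) * ⟪R (J (F p)) (F j) (N r), N i⟫)
        = -(∑ r, w k r * ⟪R (J (F p)) (F j) (N i), N r⟫) := by
      rw [← Finset.sum_neg_distrib]
      refine Finset.sum_congr rfl fun r _ => ?_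
      rw [← hw k r, hRskew2 (J (F p)) (F j) (N i) (N r)]
      ring
    rw [e4]
    ring
  -- ===== -T3 - T5 = A + D sum =====
  have hT35 : -(∑ i, ∑ k, η⁻¹ i k * ⟪R (J (F p)) (F j) (N i), F k⟫)
      - (∑ i, ∑ k, η⁻¹ i k
          * (∑ r, w k r * (∑ s, w r s * ⟪R (J (F p)) (F j) (N i), F s⟫)))
      = ∑ i, ∑ k, g⁻¹ i k * ⟪R (J (F p)) (F j) (F k), N i⟫ := by
    have hcomb : (∑ i, ∑ k, η⁻¹ i k * ⟪R (J (F p)) (F j) (N i), F k⟫)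
        + (∑ i, ∑ k, η⁻¹ i k
            * (∑ r, w k r * (∑ s, w r s * ⟪R (J (F p)) (F j) (N i), F s⟫)))
        = ∑ i, ∑ s, g⁻¹ i s * ⟪R (J (F p)) (F j) (N i), F s⟫ := by
      rw [← Finset.sum_add_distrib]
      refine Finset.sum_congr rfl fun i _ => ?_
      rw [← Finset.sum_add_distrib]
      calc ∑ k, (η⁻¹ i k * ⟪R (J (F p)) (F j) (N i), F k⟫
            + η⁻¹ i k * (∑ r, w k r * (∑ s, w r s * ⟪R (J (F p)) (F j) (N i), F s⟫)))
          = ∑ k, ∑ s, η⁻¹ i k * (((1 : Matrix (Fin n) (Fin n) ℝ) k s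
              + ∑ r, w k r * w r s) * ⟪R (J (F p)) (F j) (N i), F s⟫) := by
            refine Finset.sum_congr rfl fun k _ => ?_
            have e5 : ⟪R (J (F p)) (F j) (N i), F k⟫
                = ∑ s, (1 : Matrix (Fin n) (Fin n) ℝ) k s
                    * ⟪R (J (F p)) (F j) (N i), F s⟫ := by
              simp [Matrix.one_apply, ite_mul]
            have e6 : (∑ r, w k r * (∑ s, w r s * ⟪R (J (F p)) (F j) (N i), F s⟫))
                = ∑ s, (∑ r, w k r * w r s) * ⟪R (J (F p)) (F j) (N i), F s⟫ := by
              calc (∑ r, w k r * (∑ s, w r s * ⟪R (J (F p)) (F j) (N i), F s⟫))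
                  = ∑ r, ∑ s, w k r * (w r s * ⟪R (J (F p)) (F j) (N i), F s⟫) := by
                    refine Finset.sum_congr rfl fun r _ => ?_
                    rw [Finset.mul_sum]
                _ = ∑ s, ∑ r, w k r * (w r s * ⟪R (J (F p)) (F j) (N i), F s⟫) :=
                    Finset.sum_comm
                _ = ∑ s, (∑ r, w k r * w r s) * ⟪R (J (F p)) (F j) (N i), F s⟫ := by
                    refine Finset.sum_congr rfl fun s _ => ?_
                    rw [Finset.sum_mul]
                    exact Finset.sum_congr rfl fun r _ => by ring
            rw [e5, e6, Finset.mul_sum, Finset.mul_sum, ← Finset.sum_add_distrib]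
            refine Finset.sum_congr rfl fun s _ => ?_
            ring
        _ = ∑ s, ∑ k, η⁻¹ i k * (((1 : Matrix (Fin n) (Fin n) ℝ) k s
              + ∑ r, w k r * w r s) * ⟪R (J (F p)) (F j) (N i), F s⟫) := Finset.sum_comm
        _ = ∑ s, g⁻¹ i s * ⟪R (J (F p)) (F j) (N i), F s⟫ := by
            refine Finset.sum_congr rfl fun s _ => ?_
            rw [← hkeyE i s, Finset.sum_mul]
            exact Finset.sum_congr rfl fun k _ => by ring
    have hflip : (∑ i, ∑ s, g⁻¹ i s * ⟪R (J (F p)) (F j) (N i), F s⟫)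
        = -∑ i, ∑ k, g⁻¹ i k * ⟪R (J (F p)) (F j) (F k), N i⟫ := by
      rw [← Finset.sum_neg_distrib]
      refine Finset.sum_congr rfl fun i _ => ?_
      rw [← Finset.sum_neg_distrib]
      refine Finset.sum_congr rfl fun s _ => ?_
      rw [hRskew2 (J (F p)) (F j) (N i) (F s)]
      ring
    have := hcomb.trans hflip
    linarith [this]
  -- ===== final assembly =====
  have hNsum : (∑ i, ∑ k, η⁻¹ i k * ⟪R (J (F p)) (F j) (N i), J (N k)⟫)
      = ((∑ i, ∑ k, g⁻¹ i k * ⟪R (N p) (F j) (F k), N i⟫)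
          + (∑ i, ∑ k, g⁻¹ i k
            * (∑ r, (∑ q, ω p q * g⁻¹ q r) * ⟪R (F r) (F j) (F k), N i⟫)))
        + (∑ i, ∑ k, η⁻¹ i k
            * (∑ r, (∑ q, ω k q * g⁻¹ q r) * ⟪R (J (F p)) (F j) (N r), N i⟫)) := by
    rw [hsplitN, ← hADder]
    linarith [hC0, hT35]
  linarith [hstep1, hstep2, hFsum, hNsum]
end
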